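/- arXiv:1307.3073 — 2 statements merged into one kernel-verified Lean document; each statement's English description precedes it below -/
import Mathlib

section
/- For two permutations π and π' on disjoint index sets and an element x of π, the width of the substitution π[x ← π'] equals the maximum of the widths of π and π'. -/
/-- A point in the plane. -/
abbrev Pt := ℕ × ℕ
/-- A (discrete) interval, given by its two endpoints. -/
abbrev Iv := ℕ × ℕ
/-- An axis-parallel rectangle: a pair (x-interval, y-interval). -/
abbrev Rect := Iv × Iv

/-- The α-coordinate of a point (α ∈ {1,2} encoded as Fin 2). -/
def coordPt (α : Fin 2) (p : Pt) : ℕ := if α = 0 then p.1 else p.2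

/-- The α-projection of a rectangle. -/
def rproj (α : Fin 2) (R : Rect) : Iv := if α = 0 then R.1 else R.2

/-- Two intervals intersect. -/
def ivOverlap (I J : Iv) : Prop := I.1 ≤ J.2 ∧ J.1 ≤ I.2

instance : ∀ I J, Decidable (ivOverlap I J) := fun I J => by
  unfold ivOverlap; infer_instance

/-- Interval `I` lies strictly before interval `J`. -/
def ivLt (I J : Iv) : Prop := I.2 < J.1

instance : ∀ I J, Decidable (ivLt I J) := fun I J => by
  unfold ivLt; infer_instance

/-- Interval containment. -/
def ivSub (I J : Iv) : Prop := J.1 ≤ I.1 ∧ I.2 ≤ J.2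

instance : ∀ I J, Decidable (ivSub I J) := fun I J => by
  unfold ivSub; infer_instance

/-- Two rectangles α-view each other: their α-projections intersect. -/
def rviews (α : Fin 2) (R R' : Rect) : Prop := ivOverlap (rproj α R) (rproj α R')

instance : ∀ α R R', Decidable (rviews α R R') := fun α R R' => by
  unfold rviews; infer_instance

/-- The degenerate rectangle corresponding to a point. -/
def ptRect (p : Pt) : Rect := ((p.1, p.1), (p.2, p.2))

/-- The bounding box of two rectangles. -/
def bbox (R1 R2 : Rect) : Rect :=
  ((min R1.1.1 R2.1.1, max R1.1.2 R2.1.2), (min R1.2.1 R2.2.1, max R1.2.2 R2.2.2))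

/-- A rectangle family (as a multiset of rectangles). -/
abbrev Fam := Multiset Rect

/-- A family is `d`-wide: every rectangle α-views fewer than `d` other rectangles. -/
def Wide (d : ℕ) (F : Fam) : Prop :=
  ∀ R ∈ F, ∀ α : Fin 2,
    Multiset.card (Multiset.filter (fun R' => rviews α R R') (F.erase R)) < d

/-- One merge step: two rectangles of the family are replaced by their bounding box. -/
def MergeStep (F F' : Fam) : Prop :=
  ∃ R1 R2, R1 ∈ F ∧ R2 ∈ F.erase R1 ∧ F' = bbox R1 R2 ::ₘ ((F.erase R1).erase R2)

/-- A point set is in general position: no two points share an x- or y-coordinate. -/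
def GenPos (P : Finset Pt) : Prop :=
  ∀ p ∈ P, ∀ q ∈ P, p ≠ q → p.1 ≠ q.1 ∧ p.2 ≠ q.2

/-- `L` is a decomposition of the point set `P`: it starts with the degenerate
rectangles of `P`, each step is a merge, and it ends with a single rectangle. -/
def IsDecomp (P : Finset Pt) (L : List Fam) : Prop :=
  L.head? = some (Multiset.map ptRect P.val) ∧ List.Chain' MergeStep L ∧
  ∃ F, L.getLast? = some F ∧ Multiset.card F = 1

/-- `P` admits a `d`-wide decomposition. -/
def HasWidthLE (P : Finset Pt) (d : ℕ) : Prop :=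
  ∃ L, IsDecomp P L ∧ ∀ F ∈ L, Wide d F

/-- The width of a permutation: the least `d` such that it has a `d`-wide decomposition. -/
noncomputable def permWidth (P : Finset Pt) : ℕ := sInf {d | HasWidthLE P d}

/-- `σ` is a subpattern of `π`: an injection preserving both coordinate orders. -/
def Subpattern (σ π : Finset Pt) : Prop :=
  ∃ φ : Pt → Pt, Set.InjOn φ ↑σ ∧ (∀ p ∈ σ, φ p ∈ π) ∧
    ∀ p ∈ σ, ∀ q ∈ σ,
      (p.1 < q.1 ↔ (φ p).1 < (φ q).1) ∧ (p.2 < q.2 ↔ (φ p).2 < (φ q).2)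

/-- `q` lies strictly between `p` and `p'` in coordinate `α`. -/
def Between (α : Fin 2) (p p' q : Pt) : Prop :=
  min (coordPt α p) (coordPt α p') < coordPt α q ∧
    coordPt α q < max (coordPt α p) (coordPt α p')

instance : ∀ α p p' q, Decidable (Between α p p' q) := fun _ _ _ _ => by
  unfold Between; infer_instance

/-- `{p,p'}` is a `d`-close pair of the point set `S`: in each coordinate, fewer than
`d` points of `S` lie strictly between them. -/
def ClosePair (d : ℕ) (S : Finset Pt) (p p' : Pt) : Prop :=
  ∀ α : Fin 2, (S.filter (Between α p p')).card < d

/-- `S` has a `d`-close pair. -/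
def HasClosePair (d : ℕ) (S : Finset Pt) : Prop :=
  ∃ p ∈ S, ∃ q ∈ S, p ≠ q ∧ ClosePair d S p q

/-- `P` contains an `s × s`-grid: there are monotone threshold sequences in both
coordinates such that each of the `s²` cells contains a point of `P`. -/
def ContainsGrid (s : ℕ) (P : Finset Pt) : Prop :=
  ∃ a b : Fin (s+1) → ℕ, Monotone a ∧ Monotone b ∧
    ∀ i j : Fin s, ∃ p ∈ P,
      a i.castSucc ≤ p.1 ∧ p.1 < a i.succ ∧ b j.castSucc ≤ p.2 ∧ p.2 < b j.succ

/-- The canonical `r × r`-grid permutation. -/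
def canonGrid (r : ℕ) : Finset Pt :=
  (Finset.Icc 1 r ×ˢ Finset.Icc 1 r).image
    (fun ij => ((ij.2 - 1) * r + (r - ij.1 + 1), (ij.1 - 1) * r + ij.2))

/-- A point set is increasing: the x-order and y-order coincide. -/
def IncreasingPts (S : Set Pt) : Prop := ∀ p ∈ S, ∀ q ∈ S, (p.1 < q.1 ↔ p.2 < q.2)

/-- A point set is decreasing: the x-order and y-order are opposite. -/
def DecreasingPts (S : Set Pt) : Prop := ∀ p ∈ S, ∀ q ∈ S, (p.1 < q.1 ↔ q.2 < p.2)

/-- A point set is monotone: increasing or decreasing. -/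
def MonotonePts (S : Set Pt) : Prop := IncreasingPts S ∨ DecreasingPts S

/-- `P` can be partitioned into at most `t` increasing parts. -/
def TIncreasing (t : ℕ) (P : Finset Pt) : Prop :=
  ∃ f : Pt → ℕ, (∀ p ∈ P, f p < t) ∧ ∀ c, IncreasingPts {p | p ∈ P ∧ f p = c}

/-- `P` can be partitioned into at most `t` monotone parts. -/
def TMonotone (t : ℕ) (P : Finset Pt) : Prop :=
  ∃ f : Pt → ℕ, (∀ p ∈ P, f p < t) ∧ ∀ c, MonotonePts {p | p ∈ P ∧ f p = c}

/-- `P''` is the substitution `P[x ← P']`: the point `x` of `P` is replaced by an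
inflated copy of `P'`, with all relative orders as prescribed. -/
def IsSubstitution (P : Finset Pt) (x : Pt) (P' P'' : Finset Pt) : Prop :=
  ∃ ψ ψ' : Pt → Pt,
    Set.InjOn ψ ↑(P.erase x) ∧ Set.InjOn ψ' ↑P' ∧
    (∀ p ∈ P.erase x, ψ p ∈ P'') ∧ (∀ q ∈ P', ψ' q ∈ P'') ∧
    (∀ z ∈ P'', (∃ p ∈ P.erase x, ψ p = z) ∨ (∃ q ∈ P', ψ' q = z)) ∧
    (∀ p ∈ P.erase x, ∀ p2 ∈ P.erase x, ∀ α : Fin 2,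
      coordPt α (ψ p) < coordPt α (ψ p2) ↔ coordPt α p < coordPt α p2) ∧
    (∀ q ∈ P', ∀ q2 ∈ P', ∀ α : Fin 2,
      coordPt α (ψ' q) < coordPt α (ψ' q2) ↔ coordPt α q < coordPt α q2) ∧
    (∀ p ∈ P.erase x, ∀ q ∈ P', ∀ α : Fin 2,
      (coordPt α (ψ p) < coordPt α (ψ' q) ↔ coordPt α p < coordPt α x) ∧
      (coordPt α (ψ' q) < coordPt α (ψ p) ↔ coordPt α x < coordPt α p))

-- Section 1: boxOf

noncomputable def lo (α : Fin 2) (A : Finset Pt) : ℕ := ((A.image (coordPt α)).min).getD 0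
noncomputable def hi (α : Fin 2) (A : Finset Pt) : ℕ := ((A.image (coordPt α)).max).getD 0
noncomputable def boxOf (A : Finset Pt) : Rect := ((lo 0 A, hi 0 A), (lo 1 A, hi 1 A))

lemma rproj_boxOf (α : Fin 2) (A : Finset Pt) : rproj α (boxOf A) = (lo α A, hi α A) := by
  fin_cases α <;> rfl

lemma lo_eq_min' {A : Finset Pt} (h : A.Nonempty) (α : Fin 2) :
    lo α A = (A.image (coordPt α)).min' (h.image _) := by
  rw [lo, ← Finset.coe_min' (h.image _)]; rfl

lemma hi_eq_max' {A : Finset Pt} (h : A.Nonempty) (α : Fin 2) :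
    hi α A = (A.image (coordPt α)).max' (h.image _) := by
  rw [hi, ← Finset.coe_max' (h.image _)]; rfl

lemma lo_le {A : Finset Pt} (α : Fin 2) {a : Pt} (ha : a ∈ A) : lo α A ≤ coordPt α a := by
  rw [lo_eq_min' ⟨a, ha⟩ α]
  exact Finset.min'_le _ _ (Finset.mem_image_of_mem _ ha)

lemma le_hi {A : Finset Pt} (α : Fin 2) {a : Pt} (ha : a ∈ A) : coordPt α a ≤ hi α A := by
  rw [hi_eq_max' ⟨a, ha⟩ α]
  exact Finset.le_max' _ _ (Finset.mem_image_of_mem _ ha)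

lemma exists_lo {A : Finset Pt} (h : A.Nonempty) (α : Fin 2) :
    ∃ a ∈ A, coordPt α a = lo α A := by
  rw [lo_eq_min' h α]
  have := Finset.min'_mem (A.image (coordPt α)) (h.image _)
  simpa [Finset.mem_image] using this

lemma exists_hi {A : Finset Pt} (h : A.Nonempty) (α : Fin 2) :
    ∃ a ∈ A, coordPt α a = hi α A := by
  rw [hi_eq_max' h α]
  have := Finset.max'_mem (A.image (coordPt α)) (h.image _)
  simpa [Finset.mem_image] using this

lemma views_iff (α : Fin 2) (A B : Finset Pt) :
    rviews α (boxOf A) (boxOf B) ↔ lo α A ≤ hi α B ∧ lo α B ≤ hi α A := by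
  rw [rviews, rproj_boxOf, rproj_boxOf]; rfl

lemma views_iff_exists {A B : Finset Pt} (hA : A.Nonempty) (hB : B.Nonempty) (α : Fin 2) :
    rviews α (boxOf A) (boxOf B) ↔
      ((∃ a ∈ A, ∃ b ∈ B, coordPt α a ≤ coordPt α b) ∧
       (∃ b ∈ B, ∃ a ∈ A, coordPt α b ≤ coordPt α a)) := by
  rw [views_iff]
  constructor
  · rintro ⟨h1, h2⟩
    obtain ⟨a, ha, hae⟩ := exists_lo hA α
    obtain ⟨b, hb, hbe⟩ := exists_hi hB α
    obtain ⟨b', hb', hbe'⟩ := exists_lo hB α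
    obtain ⟨a', ha', hae'⟩ := exists_hi hA α
    exact ⟨⟨a, ha, b, hb, by omega⟩, ⟨b', hb', a', ha', by omega⟩⟩
  · rintro ⟨⟨a, ha, b, hb, hab⟩, ⟨b', hb', a', ha', hba⟩⟩
    have := lo_le α ha; have := le_hi α hb
    have := lo_le α hb'; have := le_hi α ha'
    omega

lemma boxOf_singleton (p : Pt) : boxOf {p} = ptRect p := by
  have h : ∀ α : Fin 2, lo α {p} = coordPt α p ∧ hi α {p} = coordPt α p := by
    intro α
    refine ⟨?_, ?_⟩
    · rw [lo_eq_min' (Finset.singleton_nonempty p) α]; simp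
    · rw [hi_eq_max' (Finset.singleton_nonempty p) α]; simp
  have h0 := h 0; have h1 := h 1
  simp only [boxOf, ptRect, h0.1, h0.2, h1.1, h1.2]
  have : ∀ q : Pt, coordPt 0 q = q.1 ∧ coordPt 1 q = q.2 := fun q => ⟨rfl, rfl⟩
  rw [(this p).1, (this p).2]

lemma lo_union {A B : Finset Pt} (hA : A.Nonempty) (hB : B.Nonempty) (α : Fin 2) :
    lo α (A ∪ B) = min (lo α A) (lo α B) := by
  rw [lo, lo, lo, Finset.image_union, Finset.min_union,
    ← Finset.coe_min' (hA.image (coordPt α)), ← Finset.coe_min' (hB.image (coordPt α)),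
    ← WithTop.coe_min]
  rfl

lemma hi_union {A B : Finset Pt} (hA : A.Nonempty) (hB : B.Nonempty) (α : Fin 2) :
    hi α (A ∪ B) = max (hi α A) (hi α B) := by
  rw [hi, hi, hi, Finset.image_union, Finset.max_union,
    ← Finset.coe_max' (hA.image (coordPt α)), ← Finset.coe_max' (hB.image (coordPt α)),
    ← WithBot.coe_max]
  rfl

lemma boxOf_union {A B : Finset Pt} (hA : A.Nonempty) (hB : B.Nonempty) :
    boxOf (A ∪ B) = bbox (boxOf A) (boxOf B) := by
  simp only [boxOf, bbox, lo_union hA hB, hi_union hA hB]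


-- Section 2: multiset helpers

lemma map_erase_mem {α β : Type*} [DecidableEq α] [DecidableEq β] (f : α → β) {a : α}
    {s : Multiset α} (h : a ∈ s) : (s.map f).erase (f a) = (s.erase a).map f := by
  conv_lhs => rw [← Multiset.cons_erase h]
  rw [Multiset.map_cons, Multiset.erase_cons_head]

lemma filter_erase_mem {α : Type*} [DecidableEq α] (q : α → Prop) [DecidablePred q] {a : α}
    {s : Multiset α} (h : a ∈ s) (hq : q a) :
    (s.filter q).erase a = (s.erase a).filter q := by
  conv_lhs => rw [← Multiset.cons_erase h]
  rw [Multiset.filter_cons_of_pos _ hq, Multiset.erase_cons_head]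

lemma erase_add_left' {α : Type*} [DecidableEq α] {a : α} {s : Multiset α} (t : Multiset α)
    (h : a ∈ s) : (s + t).erase a = s.erase a + t := by
  conv_lhs => rw [← Multiset.cons_erase h, Multiset.cons_add, Multiset.erase_cons_head]

lemma erase_add_right' {α : Type*} [DecidableEq α] {a : α} (s : Multiset α) {t : Multiset α}
    (h : a ∈ t) : (s + t).erase a = s + t.erase a := by
  rw [add_comm, erase_add_left' s h, add_comm]

lemma card_filter_le_of_imp {α : Type*} (p q : α → Prop) [DecidablePred p] [DecidablePred q]
    (s : Multiset α) (h : ∀ a ∈ s, p a → q a) :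
    Multiset.card (s.filter p) ≤ Multiset.card (s.filter q) := by
  induction s using Multiset.induction_on with
  | empty => simp
  | cons a s ih =>
    have ih' := ih (fun b hb => h b (Multiset.mem_cons_of_mem hb))
    by_cases hp : p a
    · have hq : q a := h a (Multiset.mem_cons_self a s) hp
      rw [Multiset.filter_cons_of_pos _ hp, Multiset.filter_cons_of_pos _ hq,
        Multiset.card_cons, Multiset.card_cons]
      omega
    · rw [Multiset.filter_cons_of_neg _ hp]
      by_cases hq : q a
      · rw [Multiset.filter_cons_of_pos _ hq, Multiset.card_cons]; omega
      · rw [Multiset.filter_cons_of_neg _ hq]; exact ih'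

-- Section 3: families of boxes

noncomputable def famOf (G : Multiset (Finset Pt)) : Fam := G.map boxOf

noncomputable def tfam (tr : Finset Pt → Finset Pt) (E : Fam) (G : Multiset (Finset Pt)) : Fam :=
  ((G.map tr).filter (fun A => A.Nonempty)).map boxOf + E

/-- The invariant carried along a lifted decomposition. -/
def GInv (P : Finset Pt) (G : Multiset (Finset Pt)) : Prop :=
  (∀ A ∈ G, A.Nonempty ∧ A ⊆ P) ∧ (∀ p ∈ P, ∃ A ∈ G, p ∈ A)

lemma wide_mono {d d' : ℕ} (h : d ≤ d') {F : Fam} (hF : Wide d F) : Wide d' F :=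
  fun R hR α => lt_of_lt_of_le (hF R hR α) h

lemma wide_of_card_le {d : ℕ} {F : Fam} (h : Multiset.card F ≤ d) : Wide d F := by
  intro R hR α
  have h1 : Multiset.card (Multiset.filter (fun R' => rviews α R R') (F.erase R)) ≤
      Multiset.card (F.erase R) := Multiset.card_le_card (Multiset.filter_le _ _)
  have h2 : Multiset.card (F.erase R) = (Multiset.card F).pred :=
    Multiset.card_erase_of_mem hR
  have h3 : 0 < Multiset.card F := Multiset.card_pos.2 (fun h0 => by simp [h0] at hR)
  rw [Nat.pred_eq_sub_one] at h2
  omega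

/-- Key step: wideness transfers from `famOf G` to `tfam tr E G`. -/
lemma wide_tfam {P : Finset Pt} {tr : Finset Pt → Finset Pt} {E : Fam} {d : ℕ}
    (hV : ∀ A B : Finset Pt, A ⊆ P → B ⊆ P → A.Nonempty → B.Nonempty →
      (tr A).Nonempty → (tr B).Nonempty → ∀ α,
      rviews α (boxOf (tr A)) (boxOf (tr B)) → rviews α (boxOf A) (boxOf B))
    (hE1 : ∀ e ∈ E, ∀ A : Finset Pt, A ⊆ P → A.Nonempty → (tr A).Nonempty → ∀ α,
      ¬ rviews α (boxOf (tr A)) e ∧ ¬ rviews α e (boxOf (tr A)))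
    (hE2 : ∀ e ∈ E, ∀ α,
      Multiset.card (Multiset.filter (fun R' => rviews α e R') (E.erase e)) < d)
    {G : Multiset (Finset Pt)} (hG : ∀ A ∈ G, A.Nonempty ∧ A ⊆ P)
    (hW : Wide d (famOf G)) : Wide d (tfam tr E G) := by
  intro R hR α
  rw [tfam] at hR
  rcases Multiset.mem_add.1 hR with hR1 | hR2
  · -- R is a box of a transported part
    obtain ⟨A', hA', rfl⟩ := Multiset.mem_map.1 hR1
    have hA'mem := Multiset.mem_filter.1 hA'
    obtain ⟨A, hAG, rfl⟩ := Multiset.mem_map.1 hA'mem.1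
    have hA'ne : (tr A).Nonempty := hA'mem.2
    have hAne := (hG A hAG).1
    have hAP := (hG A hAG).2
    have hkey : tfam tr E G = boxOf (tr A) ::ₘ
        ((((G.erase A).map tr).filter (fun B => B.Nonempty)).map boxOf + E) := by
      rw [tfam, ← map_erase_mem tr hAG,
        ← filter_erase_mem (fun B : Finset Pt => B.Nonempty) (Multiset.mem_map_of_mem tr hAG) hA'ne,
        ← map_erase_mem boxOf hA', ← Multiset.cons_add, Multiset.cons_erase hR1]
    rw [hkey, Multiset.erase_cons_head, Multiset.filter_add, Multiset.card_add]
    have hEzero : Multiset.card (Multiset.filter (fun R' => rviews α (boxOf (tr A)) R') E) = 0 := by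
      rw [Multiset.card_eq_zero, Multiset.filter_eq_nil]
      intro e he
      exact (hE1 e he A hAP hAne hA'ne α).1
    rw [hEzero, add_zero]
    have hle : Multiset.card (Multiset.filter (fun R' => rviews α (boxOf (tr A)) R')
        ((((G.erase A).map tr).filter (fun B => B.Nonempty)).map boxOf)) ≤
        Multiset.card (Multiset.filter (fun R' => rviews α (boxOf A) R')
          ((G.erase A).map boxOf)) := by
      simp only [Multiset.filter_map, Multiset.card_map, Multiset.filter_filter,
        Function.comp]
      apply card_filter_le_of_imp
      rintro B hB ⟨hview, hBne⟩
      have hBG : B ∈ G := Multiset.mem_of_mem_erase hB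
      exact hV A B hAP (hG B hBG).2 hAne (hG B hBG).1 hA'ne hBne α hview
    have hfin : Multiset.card (Multiset.filter (fun R' => rviews α (boxOf A) R')
        ((G.erase A).map boxOf)) < d := by
      have := hW (boxOf A) (Multiset.mem_map_of_mem boxOf hAG) α
      rwa [famOf, map_erase_mem boxOf hAG] at this
    omega
  · -- R is an extra rectangle
    rw [tfam, erase_add_right' _ hR2, Multiset.filter_add, Multiset.card_add]
    have hzero : Multiset.card (Multiset.filter (fun R' => rviews α R R')
        (((G.map tr).filter (fun A => A.Nonempty)).map boxOf)) = 0 := by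
      rw [Multiset.card_eq_zero, Multiset.filter_eq_nil]
      intro R' hR'
      obtain ⟨A', hA', rfl⟩ := Multiset.mem_map.1 hR'
      have hA'mem := Multiset.mem_filter.1 hA'
      obtain ⟨A, hAG, rfl⟩ := Multiset.mem_map.1 hA'mem.1
      exact (hE1 R hR2 A (hG A hAG).2 (hG A hAG).1 hA'mem.2 α).2
    rw [hzero, zero_add]
    exact hE2 R hR2 α

-- Section 4: merge step analysis and the lifting lemma

lemma mergestep_famOf {G : Multiset (Finset Pt)} {F2 : Fam}
    (hG : ∀ A ∈ G, A.Nonempty) (h : MergeStep (famOf G) F2) :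
    ∃ A B rest, G = A ::ₘ B ::ₘ rest ∧ A.Nonempty ∧ B.Nonempty ∧
      F2 = famOf ((A ∪ B) ::ₘ rest) := by
  obtain ⟨R1, R2, hR1, hR2, hF2⟩ := h
  obtain ⟨A, hAG, rfl⟩ := Multiset.mem_map.1 hR1
  rw [famOf, map_erase_mem boxOf hAG] at hR2
  obtain ⟨B, hBG, rfl⟩ := Multiset.mem_map.1 hR2
  have hAne := hG A hAG
  have hBne := hG B (Multiset.mem_of_mem_erase hBG)
  refine ⟨A, B, (G.erase A).erase B, ?_, hAne, hBne, ?_⟩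
  · rw [Multiset.cons_erase hBG, Multiset.cons_erase hAG]
  · rw [hF2]
    simp only [famOf, Multiset.map_cons]
    rw [map_erase_mem boxOf hAG, map_erase_mem boxOf hBG, ← boxOf_union hAne hBne]

lemma tfam_step (tr : Finset Pt → Finset Pt) (E : Fam) (A B : Finset Pt)
    (rest : Multiset (Finset Pt)) (hAB : tr (A ∪ B) = tr A ∪ tr B) :
    tfam tr E (A ::ₘ B ::ₘ rest) = tfam tr E ((A ∪ B) ::ₘ rest) ∨
      MergeStep (tfam tr E (A ::ₘ B ::ₘ rest)) (tfam tr E ((A ∪ B) ::ₘ rest)) := by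
  by_cases hA : (tr A).Nonempty <;> by_cases hB : (tr B).Nonempty
  · right
    have hABne : (tr (A ∪ B)).Nonempty := by
      rw [hAB]; exact hA.mono Finset.subset_union_left
    refine ⟨boxOf (tr A), boxOf (tr B), ?_, ?_, ?_⟩
    · rw [tfam, Multiset.map_cons, Multiset.map_cons,
        Multiset.filter_cons_of_pos _ hA, Multiset.filter_cons_of_pos _ hB,
        Multiset.map_cons, Multiset.map_cons, Multiset.cons_add]
      exact Multiset.mem_cons_self _ _
    · rw [tfam, Multiset.map_cons, Multiset.map_cons,
        Multiset.filter_cons_of_pos _ hA, Multiset.filter_cons_of_pos _ hB,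
        Multiset.map_cons, Multiset.map_cons, Multiset.cons_add, Multiset.cons_add,
        Multiset.erase_cons_head]
      exact Multiset.mem_cons_self _ _
    · rw [tfam, tfam, Multiset.map_cons, Multiset.map_cons, Multiset.map_cons,
        Multiset.filter_cons_of_pos _ hA, Multiset.filter_cons_of_pos _ hB,
        Multiset.filter_cons_of_pos _ hABne,
        Multiset.map_cons, Multiset.map_cons, Multiset.map_cons, Multiset.cons_add,
        Multiset.cons_add, Multiset.cons_add, Multiset.erase_cons_head,
        Multiset.erase_cons_head, hAB, boxOf_union hA hB]
  · left
    have hABeq : tr (A ∪ B) = tr A := by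
      rw [hAB, Finset.not_nonempty_iff_eq_empty.1 hB, Finset.union_empty]
    rw [tfam, tfam, Multiset.map_cons, Multiset.map_cons, Multiset.map_cons,
      Multiset.filter_cons_of_pos _ hA, Multiset.filter_cons_of_neg _ hB, hABeq,
      Multiset.filter_cons_of_pos _ hA]
  · left
    have hABeq : tr (A ∪ B) = tr B := by
      rw [hAB, Finset.not_nonempty_iff_eq_empty.1 hA, Finset.empty_union]
    rw [tfam, tfam, Multiset.map_cons, Multiset.map_cons, Multiset.map_cons,
      Multiset.filter_cons_of_neg _ hA, Multiset.filter_cons_of_pos _ hB, hABeq,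
      Multiset.filter_cons_of_pos _ hB]
  · left
    have hABne : ¬ (tr (A ∪ B)).Nonempty := by
      rw [hAB, Finset.not_nonempty_iff_eq_empty.1 hA, Finset.empty_union]; exact hB
    rw [tfam, tfam, Multiset.map_cons, Multiset.map_cons, Multiset.map_cons,
      Multiset.filter_cons_of_neg _ hA, Multiset.filter_cons_of_neg _ hB,
      Multiset.filter_cons_of_neg _ hABne]

lemma ginv_step {P : Finset Pt} {A B : Finset Pt} {rest : Multiset (Finset Pt)}
    (h : GInv P (A ::ₘ B ::ₘ rest)) : GInv P ((A ∪ B) ::ₘ rest) := by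
  obtain ⟨h1, h2⟩ := h
  constructor
  · intro C hC
    rcases Multiset.mem_cons.1 hC with hCA | hC
    · have hA := h1 A (Multiset.mem_cons_self _ _)
      have hB := h1 B (Multiset.mem_cons_of_mem (Multiset.mem_cons_self _ _))
      rw [hCA]
      exact ⟨hA.1.mono Finset.subset_union_left, Finset.union_subset hA.2 hB.2⟩
    · exact h1 C (Multiset.mem_cons_of_mem (Multiset.mem_cons_of_mem hC))
  · intro p hp
    obtain ⟨C, hC, hpC⟩ := h2 p hp
    rcases Multiset.mem_cons.1 hC with hCA | hC
    · rw [hCA] at hpC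
      exact ⟨A ∪ B, Multiset.mem_cons_self _ _, Finset.mem_union_left _ hpC⟩
    rcases Multiset.mem_cons.1 hC with hCA | hC
    · rw [hCA] at hpC
      exact ⟨A ∪ B, Multiset.mem_cons_self _ _, Finset.mem_union_right _ hpC⟩
    · exact ⟨C, Multiset.mem_cons_of_mem hC, hpC⟩

/-- The generic lifting lemma. -/
lemma lift_decomp {P : Finset Pt} {tr : Finset Pt → Finset Pt} {E : Fam} {d : ℕ}
    (hU : ∀ A B : Finset Pt, A ⊆ P → B ⊆ P → tr (A ∪ B) = tr A ∪ tr B)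
    (hV : ∀ A B : Finset Pt, A ⊆ P → B ⊆ P → A.Nonempty → B.Nonempty →
      (tr A).Nonempty → (tr B).Nonempty → ∀ α,
      rviews α (boxOf (tr A)) (boxOf (tr B)) → rviews α (boxOf A) (boxOf B))
    (hE1 : ∀ e ∈ E, ∀ A : Finset Pt, A ⊆ P → A.Nonempty → (tr A).Nonempty → ∀ α,
      ¬ rviews α (boxOf (tr A)) e ∧ ¬ rviews α e (boxOf (tr A)))
    (hE2 : ∀ e ∈ E, ∀ α,
      Multiset.card (Multiset.filter (fun R' => rviews α e R') (E.erase e)) < d) :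
    ∀ L : List Fam, List.Chain' MergeStep L → ∀ G : Multiset (Finset Pt), GInv P G →
      L.head? = some (famOf G) → (∀ F ∈ L, Wide d F) →
      ∃ (M : List Fam) (Gf : Multiset (Finset Pt)),
        List.Chain' (fun F F' => F = F' ∨ MergeStep F F') M ∧
        M.head? = some (tfam tr E G) ∧ M.getLast? = some (tfam tr E Gf) ∧
        L.getLast? = some (famOf Gf) ∧ GInv P Gf ∧ (∀ F ∈ M, Wide d F) := by
  intro L
  induction L with
  | nil => intro _ G _ h; simp at h
  | cons F L ih =>
    intro hchain G hG hhead hwide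
    have hF : F = famOf G := by simpa using hhead
    subst hF
    have hwideG : Wide d (tfam tr E G) :=
      wide_tfam hV hE1 hE2 hG.1 (hwide _ List.mem_cons_self)
    cases L with
    | nil =>
      exact ⟨[tfam tr E G], G, List.isChain_singleton _, rfl, rfl, rfl, hG,
        fun F hF => by rcases List.mem_singleton.1 hF with rfl; exact hwideG⟩
    | cons F2 L' =>
      have hstep : MergeStep (famOf G) F2 := (List.isChain_cons_cons.1 hchain).1
      have hchain' : List.Chain' MergeStep (F2 :: L') := (List.isChain_cons_cons.1 hchain).2
      obtain ⟨A, B, rest, hGeq, hAne, hBne, hF2⟩ :=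
        mergestep_famOf (fun A hA => (hG.1 A hA).1) hstep
      have hG2 : GInv P ((A ∪ B) ::ₘ rest) := ginv_step (hGeq ▸ hG)
      obtain ⟨M', Gf, hM'chain, hM'head, hM'last, hL'last, hGf, hM'wide⟩ :=
        ih hchain' ((A ∪ B) ::ₘ rest) hG2 (by rw [List.head?_cons, hF2])
          (fun F hF => hwide F (List.mem_cons_of_mem _ hF))
      have hAP := (hG.1 A (by rw [hGeq]; exact Multiset.mem_cons_self _ _)).2
      have hBmem : B ∈ G := by
        rw [hGeq]; exact Multiset.mem_cons_of_mem (Multiset.mem_cons_self _ _)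
      have hBP := (hG.1 B hBmem).2
      have hstep2 := tfam_step tr E A B rest (hU A B hAP hBP)
      refine ⟨tfam tr E G :: M', Gf, ?_, rfl, ?_, ?_, hGf, ?_⟩
      · show List.IsChain _ _
        rw [List.isChain_cons]
        refine ⟨?_, hM'chain⟩
        intro y hy
        rw [hM'head] at hy
        have hy' : y = tfam tr E ((A ∪ B) ::ₘ rest) := by simpa using hy.symm
        subst hy'
        rw [hGeq]
        exact hstep2
      · obtain ⟨m, M'', rfl⟩ : ∃ m M'', M' = m :: M'' := by
          cases M' with
          | nil => simp at hM'head
          | cons m M'' => exact ⟨m, M'', rfl⟩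
        rw [List.getLast?_cons_cons]
        exact hM'last
      · rw [List.getLast?_cons_cons]
        exact hL'last
      · intro F hF
        rcases List.mem_cons.1 hF with rfl | hF
        · exact hwideG
        · exact hM'wide F hF

-- Section 5: removing stutters from a chain

def dd : List Fam → List Fam
  | [] => []
  | [a] => [a]
  | a :: b :: l => if a = b then dd (b :: l) else a :: dd (b :: l)

lemma dd_ne_nil : ∀ l : List Fam, l ≠ [] → dd l ≠ []
  | [], h => absurd rfl h
  | [a], _ => by simp [dd]
  | a :: b :: l, _ => by
    rw [dd]
    split
    · exact dd_ne_nil (b :: l) (by simp)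
    · simp

lemma dd_head? : ∀ l : List Fam, (dd l).head? = l.head?
  | [] => rfl
  | [a] => rfl
  | a :: b :: l => by
    rw [dd]
    split
    · rename_i h
      rw [dd_head? (b :: l), List.head?_cons, List.head?_cons, h]
    · rw [List.head?_cons, List.head?_cons]

lemma dd_getLast? : ∀ l : List Fam, (dd l).getLast? = l.getLast?
  | [] => rfl
  | [a] => rfl
  | a :: b :: l => by
    rw [dd, List.getLast?_cons_cons]
    split
    · exact dd_getLast? (b :: l)
    · obtain ⟨c, m, hm⟩ : ∃ c m, dd (b :: l) = c :: m := by
        rcases h : dd (b :: l) with _ | ⟨c, m⟩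
        · exact absurd h (dd_ne_nil _ (by simp))
        · exact ⟨c, m, rfl⟩
      rw [hm, List.getLast?_cons_cons, ← hm]
      exact dd_getLast? (b :: l)

lemma dd_subset : ∀ l : List Fam, ∀ F ∈ dd l, F ∈ l
  | [] => by simp [dd]
  | [a] => by simp [dd]
  | a :: b :: l => by
    intro F hF
    rw [dd] at hF
    split at hF
    · exact List.mem_cons_of_mem _ (dd_subset (b :: l) F hF)
    · rcases List.mem_cons.1 hF with rfl | hF
      · exact List.mem_cons_self
      · exact List.mem_cons_of_mem _ (dd_subset (b :: l) F hF)

lemma dd_chain : ∀ l : List Fam,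
    List.Chain' (fun F F' => F = F' ∨ MergeStep F F') l → List.Chain' MergeStep (dd l)
  | [] => fun _ => List.isChain_nil
  | [a] => fun _ => List.isChain_singleton _
  | a :: b :: l => by
    intro h
    obtain ⟨hab, h'⟩ := List.isChain_cons_cons.1 h
    rw [dd]
    split
    · exact dd_chain (b :: l) h'
    · rename_i hne
      have hm : MergeStep a b := by
        rcases hab with rfl | h
        · exact absurd rfl hne
        · exact h
      have hc := dd_chain (b :: l) h'
      show List.IsChain _ _
      rw [List.isChain_cons]
      refine ⟨?_, hc⟩
      intro y hy
      rw [dd_head? (b :: l), List.head?_cons] at hy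
      have hyb : b = y := by simpa using hy
      rw [← hyb]
      exact hm

-- Section 6: existence of decompositions

lemma exists_chain : ∀ (n : ℕ) (F : Fam), Multiset.card F = n + 1 →
    ∃ L : List Fam, L.head? = some F ∧ List.Chain' MergeStep L ∧
      (∃ Fe, L.getLast? = some Fe ∧ Multiset.card Fe = 1) ∧
      ∀ F' ∈ L, Multiset.card F' ≤ n + 1 := by
  intro n
  induction n with
  | zero =>
    intro F hF
    exact ⟨[F], rfl, List.isChain_singleton _, ⟨F, rfl, hF⟩,
      fun F' hF' => by rcases List.mem_singleton.1 hF' with rfl; omega⟩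
  | succ n ih =>
    intro F hF
    obtain ⟨R1, hR1⟩ : ∃ R1, R1 ∈ F :=
      Multiset.exists_mem_of_ne_zero (by intro h0; rw [h0] at hF; simp at hF)
    obtain ⟨R2, hR2⟩ : ∃ R2, R2 ∈ F.erase R1 := by
      apply Multiset.exists_mem_of_ne_zero
      intro h0
      have := Multiset.card_erase_of_mem hR1
      rw [h0] at this
      simp at this
      omega
    set F2 : Fam := bbox R1 R2 ::ₘ (F.erase R1).erase R2 with hF2def
    have hcard : Multiset.card F2 = n + 1 := by
      rw [hF2def, Multiset.card_cons, Multiset.card_erase_of_mem hR2,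
        Multiset.card_erase_of_mem hR1, hF]
      rfl
    obtain ⟨L2, hhead, hchain, hlast, hcards⟩ := ih F2 hcard
    obtain ⟨m, M, rfl⟩ : ∃ m M, L2 = m :: M := by
      rcases L2 with _ | ⟨m, M⟩
      · simp at hhead
      · exact ⟨m, M, rfl⟩
    have hm : m = F2 := by simpa using hhead
    refine ⟨F :: m :: M, rfl, ?_, ?_, ?_⟩
    · show List.IsChain _ _
      rw [List.isChain_cons_cons]
      exact ⟨hm ▸ ⟨R1, R2, hR1, hR2, rfl⟩, hchain⟩
    · obtain ⟨Fe, hFe, hFec⟩ := hlast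
      exact ⟨Fe, by rw [List.getLast?_cons_cons]; exact hFe, hFec⟩
    · intro F' hF'
      rcases List.mem_cons.1 hF' with rfl | hF'
      · omega
      · have := hcards F' hF'
        omega

lemma hasWidthLE_card {P : Finset Pt} (h : P.Nonempty) : HasWidthLE P P.card := by
  have hc : Multiset.card (Multiset.map ptRect P.val) = (P.card - 1) + 1 := by
    rw [Multiset.card_map]
    have hv : Multiset.card P.val = P.card := rfl
    have := Finset.card_pos.2 h
    omega
  obtain ⟨L, hhead, hchain, ⟨Fe, hFe, hFec⟩, hcards⟩ := exists_chain (P.card - 1) _ hc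
  refine ⟨L, ⟨hhead, hchain, Fe, hFe, hFec⟩, ?_⟩
  intro F hF
  apply wide_of_card_le
  have := hcards F hF
  have := Finset.card_pos.2 h
  omega

lemma widthSet_nonempty {P : Finset Pt} (h : P.Nonempty) :
    Set.Nonempty {d | HasWidthLE P d} := ⟨P.card, hasWidthLE_card h⟩

lemma hasWidthLE_permWidth {P : Finset Pt} (h : P.Nonempty) : HasWidthLE P (permWidth P) :=
  Nat.sInf_mem (widthSet_nonempty h)

lemma permWidth_pos {P : Finset Pt} (h : P.Nonempty) : 1 ≤ permWidth P := by
  by_contra hlt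
  have h0 : permWidth P = 0 := by omega
  have hw : HasWidthLE P 0 := h0 ▸ hasWidthLE_permWidth h
  obtain ⟨L, ⟨hhead, hchain, Fe, hFe, hFec⟩, hwide⟩ := hw
  have hFeL : Fe ∈ L := by
    have hLne : L ≠ [] := by intro h0; rw [h0] at hFe; simp at hFe
    rw [List.getLast?_eq_getLast_of_ne_nil hLne] at hFe
    have : Fe = L.getLast hLne := by simpa using hFe.symm
    rw [this]
    exact List.getLast_mem hLne
  obtain ⟨R, hR⟩ : ∃ R, R ∈ Fe :=
    Multiset.exists_mem_of_ne_zero (by intro h0'; rw [h0'] at hFec; simp at hFec)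
  have := hwide Fe hFeL R hR 0
  omega

-- Section 7: subpattern width monotonicity

lemma le_push {σ : Finset Pt} {φ : Pt → Pt}
    (hord : ∀ s ∈ σ, ∀ t ∈ σ, ∀ α : Fin 2,
      coordPt α s < coordPt α t ↔ coordPt α (φ s) < coordPt α (φ t))
    {s t : Pt} (hs : s ∈ σ) (ht : t ∈ σ) (α : Fin 2)
    (h : coordPt α s ≤ coordPt α t) : coordPt α (φ s) ≤ coordPt α (φ t) := by
  by_contra hlt
  push_neg at hlt
  have := (hord t ht s hs α).2 hlt
  omega

lemma hasWidthLE_subpattern {σ π : Finset Pt} {φ : Pt → Pt} (hσne : σ.Nonempty)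
    (hmap : ∀ s ∈ σ, φ s ∈ π) (hinj : Set.InjOn φ ↑σ)
    (hord : ∀ s ∈ σ, ∀ t ∈ σ, ∀ α : Fin 2,
      coordPt α s < coordPt α t ↔ coordPt α (φ s) < coordPt α (φ t))
    {d : ℕ} (h : HasWidthLE π d) : HasWidthLE σ d := by
  classical
  set tr : Finset Pt → Finset Pt := fun A => σ.filter (fun s => φ s ∈ A) with htr
  have hU : ∀ A B : Finset Pt, A ⊆ π → B ⊆ π → tr (A ∪ B) = tr A ∪ tr B := by
    intro A B _ _
    ext s
    simp only [htr, Finset.mem_filter, Finset.mem_union]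
    tauto
  have hV : ∀ A B : Finset Pt, A ⊆ π → B ⊆ π → A.Nonempty → B.Nonempty →
      (tr A).Nonempty → (tr B).Nonempty → ∀ α,
      rviews α (boxOf (tr A)) (boxOf (tr B)) → rviews α (boxOf A) (boxOf B) := by
    intro A B _ _ hAne hBne htA htB α hview
    rw [views_iff_exists htA htB α] at hview
    obtain ⟨⟨a, ha, b, hb, hab⟩, ⟨b', hb', a', ha', hba⟩⟩ := hview
    simp only [htr, Finset.mem_filter] at ha hb ha' hb'
    rw [views_iff_exists hAne hBne α]
    exact ⟨⟨φ a, ha.2, φ b, hb.2, le_push hord ha.1 hb.1 α hab⟩,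
      ⟨φ b', hb'.2, φ a', ha'.2, le_push hord hb'.1 ha'.1 α hba⟩⟩
  obtain ⟨L, ⟨hhead, hchain, Fe, hFe, hFec⟩, hwide⟩ := h
  set G0 : Multiset (Finset Pt) := π.val.map (fun p => ({p} : Finset Pt)) with hG0
  have hG0inv : GInv π G0 := by
    constructor
    · intro A hA
      obtain ⟨p, hp, rfl⟩ := Multiset.mem_map.1 hA
      exact ⟨Finset.singleton_nonempty p, Finset.singleton_subset_iff.2 hp⟩
    · intro p hp
      exact ⟨{p}, Multiset.mem_map_of_mem _ hp, Finset.mem_singleton_self p⟩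
  have hfamG0 : famOf G0 = Multiset.map ptRect π.val := by
    rw [famOf, hG0, Multiset.map_map]
    exact Multiset.map_congr rfl (fun p _ => boxOf_singleton p)
  obtain ⟨M, Gf, hMchain, hMhead, hMlast, hLlast, hGfinv, hMwide⟩ :=
    lift_decomp (E := (0 : Fam)) (d := d) hU hV (by simp) (by simp) L hchain G0 hG0inv
      (by rw [hhead, hfamG0]) hwide
  -- identify Gf
  have hGfcard : Multiset.card Gf = 1 := by
    rw [hLlast] at hFe
    have : famOf Gf = Fe := by simpa using hFe
    rw [← this, famOf, Multiset.card_map] at hFec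
    exact hFec
  obtain ⟨C, rfl⟩ := Multiset.card_eq_one.1 hGfcard
  have hCπ : C = π := by
    apply Finset.Subset.antisymm (hGfinv.1 C (Multiset.mem_singleton_self C)).2
    intro p hp
    obtain ⟨A, hA, hpA⟩ := hGfinv.2 p hp
    rw [Multiset.mem_singleton.1 hA] at hpA
    exact hpA
  rw [hCπ] at hMlast
  -- the initial transported family
  have hinit : tfam tr 0 G0 = Multiset.map ptRect σ.val := by
    have hnodupmap : (σ.val.map φ).Nodup :=
      Multiset.Nodup.map_on (fun a ha b hb he => hinj (Finset.mem_coe.2 ha)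
        (Finset.mem_coe.2 hb) he) σ.nodup
    have hmle : σ.val.map φ ≤ π.val := by
      rw [Multiset.le_iff_count]
      intro a
      by_cases hmem : a ∈ σ.val.map φ
      · have h1 : Multiset.count a (σ.val.map φ) ≤ 1 :=
          Multiset.nodup_iff_count_le_one.1 hnodupmap a
        obtain ⟨s, hs, rfl⟩ := Multiset.mem_map.1 hmem
        have h2 : φ s ∈ π.val := hmap s hs
        have h3 : 0 < Multiset.count (φ s) π.val := Multiset.count_pos.2 h2
        omega
      · rw [Multiset.count_eq_zero_of_notMem hmem]
        omega
    set rest : Multiset Pt := π.val - σ.val.map φ with hrest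
    have hsplit : σ.val.map φ + rest = π.val := by
      rw [hrest, add_comm]
      exact tsub_add_cancel_of_le hmle
    have hrest_empty : ∀ p ∈ rest, tr {p} = ∅ := by
      intro p hp
      have hnotin : p ∉ σ.val.map φ := by
        intro hin
        have hcs : Multiset.count p rest = Multiset.count p π.val -
            Multiset.count p (σ.val.map φ) := by rw [hrest, Multiset.count_sub]
        have h1 : 0 < Multiset.count p rest := Multiset.count_pos.2 hp
        have h2 : Multiset.count p π.val ≤ 1 :=
          Multiset.nodup_iff_count_le_one.1 π.nodup p
        have h3 : 0 < Multiset.count p (σ.val.map φ) := Multiset.count_pos.2 hin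
        omega
      rw [htr]
      simp only [Finset.filter_eq_empty_iff]
      intro s hs
      rw [Finset.mem_singleton]
      intro he
      exact hnotin (he ▸ Multiset.mem_map_of_mem φ hs)
    have hsing : ∀ s ∈ σ.val, tr {φ s} = {s} := by
      intro s hs
      ext u
      simp only [htr, Finset.mem_filter, Finset.mem_singleton]
      constructor
      · rintro ⟨hu, he⟩
        exact hinj (Finset.mem_coe.2 hu) (Finset.mem_coe.2 hs) he
      · rintro rfl
        exact ⟨hs, rfl⟩
    rw [tfam, add_zero, hG0, ← hsplit, Multiset.map_add, Multiset.map_add,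
      Multiset.map_map, Multiset.map_map, Multiset.filter_add]
    have e1 : Multiset.map ((tr ∘ fun p => ({p} : Finset Pt)) ∘ φ) σ.val =
        σ.val.map (fun s => ({s} : Finset Pt)) :=
      Multiset.map_congr rfl (fun s hs => hsing s hs)
    have e2 : Multiset.filter (fun A => A.Nonempty)
        (Multiset.map tr (Multiset.map (fun p => ({p} : Finset Pt)) rest)) = 0 := by
      rw [Multiset.map_map]
      rw [Multiset.filter_eq_nil]
      intro A hA
      obtain ⟨p, hp, rfl⟩ := Multiset.mem_map.1 hA
      simp only [Function.comp]
      rw [hrest_empty p hp]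
      simp
    rw [e1, e2, add_zero]
    have e3 : Multiset.filter (fun A => A.Nonempty)
        (σ.val.map (fun s => ({s} : Finset Pt))) =
        σ.val.map (fun s => ({s} : Finset Pt)) := by
      rw [Multiset.filter_eq_self]
      intro A hA
      obtain ⟨s, hs, rfl⟩ := Multiset.mem_map.1 hA
      exact Finset.singleton_nonempty s
    rw [e3, Multiset.map_map]
    exact Multiset.map_congr rfl (fun s _ => boxOf_singleton s)
  -- final family
  have hfin : Multiset.card (tfam tr 0 {π}) = 1 := by
    rw [tfam, add_zero]
    have : tr π = σ := by
      rw [htr]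
      simp only []
      rw [Finset.filter_eq_self]
      exact fun s hs => hmap s hs
    rw [Multiset.map_singleton, this]
    have : Multiset.filter (fun A : Finset Pt => A.Nonempty) {σ} = {σ} := by
      rw [Multiset.filter_eq_self]
      intro A hA
      rw [Multiset.mem_singleton.1 hA]
      exact hσne
    rw [this]
    simp
  refine ⟨dd M, ⟨?_, dd_chain M hMchain, tfam tr 0 {π}, ?_, hfin⟩, ?_⟩
  · rw [dd_head? M, hMhead, hinit]
  · rw [dd_getLast? M, hMlast]
  · intro F hF
    exact hMwide F (dd_subset M F hF)

-- Section 8: generic small lemmas for the construction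

lemma genpos_coord_ne {S : Finset Pt} (hS : GenPos S) {p q : Pt} (hp : p ∈ S) (hq : q ∈ S)
    (hne : p ≠ q) (α : Fin 2) : coordPt α p ≠ coordPt α q := by
  have h := hS p hp q hq hne
  fin_cases α
  · exact h.1
  · exact h.2

lemma ginv_init (S : Finset Pt) : GInv S (S.val.map (fun p => ({p} : Finset Pt))) := by
  constructor
  · intro A hA
    obtain ⟨p, hp, rfl⟩ := Multiset.mem_map.1 hA
    exact ⟨Finset.singleton_nonempty p, Finset.singleton_subset_iff.2 hp⟩
  · intro p hp
    exact ⟨{p}, Multiset.mem_map_of_mem _ hp, Finset.mem_singleton_self p⟩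

lemma famOf_init (S : Finset Pt) :
    famOf (S.val.map (fun p => ({p} : Finset Pt))) = Multiset.map ptRect S.val := by
  rw [famOf, Multiset.map_map]
  exact Multiset.map_congr rfl (fun p _ => boxOf_singleton p)

lemma gf_eq {S : Finset Pt} {Gf : Multiset (Finset Pt)} (hinv : GInv S Gf)
    (hcard : Multiset.card (famOf Gf) = 1) : Gf = {S} := by
  rw [famOf, Multiset.card_map] at hcard
  obtain ⟨C, rfl⟩ := Multiset.card_eq_one.1 hcard
  have hCS : C = S := by
    apply Finset.Subset.antisymm (hinv.1 C (Multiset.mem_singleton_self C)).2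
    intro p hp
    obtain ⟨A, hA, hpA⟩ := hinv.2 p hp
    rw [Multiset.mem_singleton.1 hA] at hpA
    exact hpA
  rw [hCS]

lemma hasWidthLE_mono {S : Finset Pt} {d d' : ℕ} (h : d ≤ d') (hw : HasWidthLE S d) :
    HasWidthLE S d' := by
  obtain ⟨L, hL, hwide⟩ := hw
  exact ⟨L, hL, fun F hF => wide_mono h (hwide F hF)⟩

lemma mergestep_ne {F F' : Fam} (h : MergeStep F F') : F ≠ F' := by
  obtain ⟨R1, R2, hR1, hR2, rfl⟩ := h
  intro he
  have hc2 : 0 < Multiset.card (F.erase R1) := Multiset.card_pos.2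
    (fun h0 => by rw [h0] at hR2; simp at hR2)
  have h1 : Multiset.card (F.erase R1) = (Multiset.card F).pred :=
    Multiset.card_erase_of_mem hR1
  have h2 : Multiset.card ((F.erase R1).erase R2) = (Multiset.card (F.erase R1)).pred :=
    Multiset.card_erase_of_mem hR2
  have h3 := congrArg Multiset.card he
  rw [Multiset.card_cons, h2, h1] at h3
  have h4 : 0 < Multiset.card F := Multiset.card_pos.2
    (fun h0 => by rw [h0] at hR1; simp at hR1)
  rw [Nat.pred_eq_sub_one] at h1
  rw [Nat.pred_eq_sub_one, Nat.pred_eq_sub_one] at h3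
  omega

-- Section 9: the substitution construction

lemma hasWidthLE_subst {P P' P'' : Finset Pt} {x : Pt} (hx : x ∈ P) (hP'ne : P'.Nonempty)
    (hP : GenPos P) (hP'' : GenPos P'')
    {ψ ψ' : Pt → Pt}
    (hinjψ : Set.InjOn ψ ↑(P.erase x)) (hinjψ' : Set.InjOn ψ' ↑P')
    (hψP'' : ∀ p ∈ P.erase x, ψ p ∈ P'') (hψ'P'' : ∀ q ∈ P', ψ' q ∈ P'')
    (hsurj : ∀ z ∈ P'', (∃ p ∈ P.erase x, ψ p = z) ∨ (∃ q ∈ P', ψ' q = z))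
    (hordψ : ∀ p ∈ P.erase x, ∀ p2 ∈ P.erase x, ∀ α : Fin 2,
      coordPt α (ψ p) < coordPt α (ψ p2) ↔ coordPt α p < coordPt α p2)
    (hordψ' : ∀ q ∈ P', ∀ q2 ∈ P', ∀ α : Fin 2,
      coordPt α (ψ' q) < coordPt α (ψ' q2) ↔ coordPt α q < coordPt α q2)
    (hmix : ∀ p ∈ P.erase x, ∀ q ∈ P', ∀ α : Fin 2,
      (coordPt α (ψ p) < coordPt α (ψ' q) ↔ coordPt α p < coordPt α x) ∧
      (coordPt α (ψ' q) < coordPt α (ψ p) ↔ coordPt α x < coordPt α p))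
    {m : ℕ} (hm1 : 1 ≤ m) (hd1 : HasWidthLE P m) (hd2 : HasWidthLE P' m) :
    HasWidthLE P'' m := by
  classical
  -- basic coordinate facts
  have hxc : ∀ p ∈ P.erase x, ∀ α : Fin 2, coordPt α p ≠ coordPt α x := by
    intro p hp α
    have hpP := Finset.mem_of_mem_erase hp
    have hpx := (Finset.mem_erase.1 hp).1
    exact genpos_coord_ne hP hpP hx hpx α
  -- the copies of the two kinds of points are distinct
  have hψψ' : ∀ p ∈ P.erase x, ∀ q ∈ P', ψ p ≠ ψ' q := by
    intro p hp q hq he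
    have h := (hmix p hp q hq 0)
    have hc := hxc p hp 0
    rcases lt_or_gt_of_ne hc with hlt | hgt
    · have := h.1.2 hlt; rw [he] at this; omega
    · have := h.2.2 hgt; rw [he] at this; omega
  -- splitting of P''
  have hsplit : P''.val = (P.erase x).val.map ψ + P'.val.map ψ' := by
    have hnd1 : ((P.erase x).val.map ψ).Nodup :=
      Multiset.Nodup.map_on (fun a ha b hb he => hinjψ (Finset.mem_coe.2 ha)
        (Finset.mem_coe.2 hb) he) (P.erase x).nodup
    have hnd2 : (P'.val.map ψ').Nodup :=
      Multiset.Nodup.map_on (fun a ha b hb he => hinjψ' (Finset.mem_coe.2 ha)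
        (Finset.mem_coe.2 hb) he) P'.nodup
    have hdisj : _root_.Disjoint ((P.erase x).val.map ψ) (P'.val.map ψ') := by
      rw [Multiset.disjoint_left]
      intro z hz1 hz2
      obtain ⟨p, hp, rfl⟩ := Multiset.mem_map.1 hz1
      obtain ⟨q, hq, he⟩ := Multiset.mem_map.1 hz2
      exact hψψ' p hp q hq he.symm
    rw [Multiset.Nodup.ext P''.nodup (Multiset.nodup_add.2 ⟨hnd1, hnd2, hdisj⟩)]
    intro z
    constructor
    · intro hz
      rcases hsurj z hz with ⟨p, hp, he⟩ | ⟨q, hq, he⟩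
      · exact Multiset.mem_add.2 (Or.inl (he ▸ Multiset.mem_map_of_mem ψ hp))
      · exact Multiset.mem_add.2 (Or.inr (he ▸ Multiset.mem_map_of_mem ψ' hq))
    · intro hz
      rcases Multiset.mem_add.1 hz with hz | hz
      · obtain ⟨p, hp, rfl⟩ := Multiset.mem_map.1 hz
        exact hψP'' p hp
      · obtain ⟨q, hq, rfl⟩ := Multiset.mem_map.1 hz
        exact hψ'P'' q hq
  -- the fixed singleton rectangles
  set E1 : Fam := (P.erase x).val.map (fun p => ptRect (ψ p)) with hE1def
  -- ψ-points do not view copy boxes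
  have hE1views : ∀ p ∈ P.erase x, ∀ A : Finset Pt, A ⊆ P' → (A.image ψ').Nonempty → ∀ α : Fin 2,
      ¬ rviews α (boxOf (A.image ψ')) (ptRect (ψ p)) ∧
      ¬ rviews α (ptRect (ψ p)) (boxOf (A.image ψ')) := by
    intro p hp A hAP' hne α
    rw [← boxOf_singleton (ψ p)]
    have h1 := views_iff_exists hne (Finset.singleton_nonempty (ψ p)) α
    have h2 := views_iff_exists (Finset.singleton_nonempty (ψ p)) hne α
    constructor
    · rw [h1]
      rintro ⟨⟨a, ha, b, hb, hab⟩, ⟨b', hb', a', ha', hba⟩⟩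
      obtain ⟨q, hq, rfl⟩ := Finset.mem_image.1 ha
      obtain ⟨q', hq', rfl⟩ := Finset.mem_image.1 ha'
      rw [Finset.mem_singleton.1 hb] at hab
      rw [Finset.mem_singleton.1 hb'] at hba
      rcases lt_or_gt_of_ne (hxc p hp α) with hlt | hgt
      · have := (hmix p hp q (hAP' hq) α).1.2 hlt
        omega
      · have := (hmix p hp q' (hAP' hq') α).2.2 hgt
        omega
    · rw [h2]
      rintro ⟨⟨a, ha, b, hb, hab⟩, ⟨b', hb', a', ha', hba⟩⟩
      obtain ⟨q, hq, rfl⟩ := Finset.mem_image.1 hb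
      obtain ⟨q', hq', rfl⟩ := Finset.mem_image.1 hb'
      rw [Finset.mem_singleton.1 ha] at hab
      rw [Finset.mem_singleton.1 ha'] at hba
      rcases lt_or_gt_of_ne (hxc p hp α) with hlt | hgt
      · have := (hmix p hp q' (hAP' hq') α).1.2 hlt
        omega
      · have := (hmix p hp q (hAP' hq) α).2.2 hgt
        omega
  -- ψ-points do not view each other
  have hE1E1 : ∀ e ∈ E1, ∀ α : Fin 2,
      Multiset.card (Multiset.filter (fun R' => rviews α e R') (E1.erase e)) < m := by
    intro e he α
    have hzero : Multiset.filter (fun R' => rviews α e R') (E1.erase e) = 0 := by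
      rw [Multiset.filter_eq_nil]
      intro e' he'
      obtain ⟨p, hp, rfl⟩ := Multiset.mem_map.1 he
      have hnd : E1.Nodup := by
        rw [hE1def]
        refine Multiset.Nodup.map_on ?_ (P.erase x).nodup
        intro a ha b hb hab
        apply hinjψ (Finset.mem_coe.2 (by exact ha)) (Finset.mem_coe.2 (by exact hb))
        have h1 : (ψ a).1 = (ψ b).1 := congrArg (fun R : Rect => R.1.1) hab
        have h2 : (ψ a).2 = (ψ b).2 := congrArg (fun R : Rect => R.2.1) hab
        exact Prod.ext h1 h2
      have he'E1 : e' ∈ E1 := Multiset.mem_of_mem_erase he'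
      have he'ne : e' ≠ ptRect (ψ p) := by
        intro hcontra
        rw [hcontra] at he'
        have := Multiset.count_erase_self (ptRect (ψ p)) E1
        have hc1 : Multiset.count (ptRect (ψ p)) E1 ≤ 1 :=
          Multiset.nodup_iff_count_le_one.1 hnd _
        have hc2 : 0 < Multiset.count (ptRect (ψ p)) (E1.erase (ptRect (ψ p))) :=
          Multiset.count_pos.2 he'
        omega
      obtain ⟨p2, hp2, rfl⟩ := Multiset.mem_map.1 he'E1
      have hpne : ψ p2 ≠ ψ p := fun hc => he'ne (by rw [hc])
      have hcne : coordPt α (ψ p2) ≠ coordPt α (ψ p) :=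
        genpos_coord_ne hP'' (hψP'' p2 hp2) (hψP'' p hp) hpne α
      rw [← boxOf_singleton (ψ p), ← boxOf_singleton (ψ p2),
        views_iff_exists (Finset.singleton_nonempty _) (Finset.singleton_nonempty _) α]
      rintro ⟨⟨a, ha, b, hb, hab⟩, ⟨b', hb', a', ha', hba⟩⟩
      rw [Finset.mem_singleton.1 ha] at hab
      rw [Finset.mem_singleton.1 hb] at hab
      rw [Finset.mem_singleton.1 ha'] at hba
      rw [Finset.mem_singleton.1 hb'] at hba
      omega
    rw [hzero]
    exact lt_of_lt_of_le (by simp) hm1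
  -- Phase 1: transport the decomposition of P' into the copy
  obtain ⟨L', ⟨hhead', hchain', Fe', hFe', hFec'⟩, hwide'⟩ := hd2
  set tr1 : Finset Pt → Finset Pt := fun A => A.image ψ' with htr1
  have hU1 : ∀ A B : Finset Pt, A ⊆ P' → B ⊆ P' → tr1 (A ∪ B) = tr1 A ∪ tr1 B :=
    fun A B _ _ => Finset.image_union A B
  have hle' : ∀ q ∈ P', ∀ q2 ∈ P', ∀ α : Fin 2,
      coordPt α (ψ' q) ≤ coordPt α (ψ' q2) → coordPt α q ≤ coordPt α q2 := by
    intro q hq q2 hq2 α hle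
    by_contra hlt
    push_neg at hlt
    have := (hordψ' q2 hq2 q hq α).2 hlt
    omega
  have hV1 : ∀ A B : Finset Pt, A ⊆ P' → B ⊆ P' → A.Nonempty → B.Nonempty →
      (tr1 A).Nonempty → (tr1 B).Nonempty → ∀ α,
      rviews α (boxOf (tr1 A)) (boxOf (tr1 B)) → rviews α (boxOf A) (boxOf B) := by
    intro A B hAP hBP hAne hBne htA htB α hview
    rw [views_iff_exists htA htB α] at hview
    obtain ⟨⟨a, ha, b, hb, hab⟩, ⟨b', hb', a', ha', hba⟩⟩ := hview
    obtain ⟨qa, hqa, rfl⟩ := Finset.mem_image.1 ha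
    obtain ⟨qb, hqb, rfl⟩ := Finset.mem_image.1 hb
    obtain ⟨qb', hqb', rfl⟩ := Finset.mem_image.1 hb'
    obtain ⟨qa', hqa', rfl⟩ := Finset.mem_image.1 ha'
    rw [views_iff_exists hAne hBne α]
    exact ⟨⟨qa, hqa, qb, hqb, hle' qa (hAP hqa) qb (hBP hqb) α hab⟩,
      ⟨qb', hqb', qa', hqa', hle' qb' (hBP hqb') qa' (hAP hqa') α hba⟩⟩
  have hE11 : ∀ e ∈ E1, ∀ A : Finset Pt, A ⊆ P' → A.Nonempty → (tr1 A).Nonempty → ∀ α,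
      ¬ rviews α (boxOf (tr1 A)) e ∧ ¬ rviews α e (boxOf (tr1 A)) := by
    intro e he A hAP hAne htA α
    obtain ⟨p, hp, rfl⟩ := Multiset.mem_map.1 he
    exact ⟨(hE1views p (Finset.mem_def.2 hp) A hAP htA α).1,
      (hE1views p (Finset.mem_def.2 hp) A hAP htA α).2⟩
  obtain ⟨M1, Gf1, hM1chain, hM1head, hM1last, hL1last, hGf1inv, hM1wide⟩ :=
    lift_decomp (P := P') hU1 hV1 hE11 hE1E1 L' hchain'
      (P'.val.map (fun p => ({p} : Finset Pt))) (ginv_init P')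
      (by rw [hhead', famOf_init]) hwide'
  have hGf1eq : Gf1 = {P'} := by
    apply gf_eq hGf1inv
    rw [hL1last] at hFe'
    have : famOf Gf1 = Fe' := by simpa using hFe'
    rw [this]
    exact hFec'
  rw [hGf1eq] at hM1last
  -- the value at the phase boundary
  have hlast1 : tfam tr1 E1 {P'} = boxOf (P'.image ψ') ::ₘ E1 := by
    rw [tfam, Multiset.map_singleton]
    have hfe : Multiset.filter (fun A : Finset Pt => A.Nonempty) {tr1 P'} = {tr1 P'} := by
      rw [Multiset.filter_eq_self]
      intro A hA
      rw [Multiset.mem_singleton.1 hA]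
      exact hP'ne.image ψ'
    rw [hfe, Multiset.map_singleton, Multiset.singleton_add]
  have hsplit' : Multiset.map ptRect P''.val =
      E1 + Multiset.map (fun q => ptRect (ψ' q)) P'.val := by
    rw [hsplit, Multiset.map_add, Multiset.map_map, Multiset.map_map, hE1def]
    rfl
  have hhead1 : tfam tr1 E1 (P'.val.map (fun p => ({p} : Finset Pt))) =
      Multiset.map ptRect P''.val := by
    rw [tfam, Multiset.map_map]
    have e1 : Multiset.map (tr1 ∘ fun p => ({p} : Finset Pt)) P'.val =
        Multiset.map (fun q => ({ψ' q} : Finset Pt)) P'.val :=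
      Multiset.map_congr rfl (fun q _ => Finset.image_singleton ψ' q)
    have e2 : Multiset.filter (fun A : Finset Pt => A.Nonempty)
        (Multiset.map (fun q => ({ψ' q} : Finset Pt)) P'.val) =
        Multiset.map (fun q => ({ψ' q} : Finset Pt)) P'.val := by
      rw [Multiset.filter_eq_self]
      intro A hA
      obtain ⟨q, _, rfl⟩ := Multiset.mem_map.1 hA
      exact Finset.singleton_nonempty _
    rw [e1, e2, Multiset.map_map]
    have e3 : Multiset.map (boxOf ∘ fun q => ({ψ' q} : Finset Pt)) P'.val =
        Multiset.map (fun q => ptRect (ψ' q)) P'.val :=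
      Multiset.map_congr rfl (fun q _ => boxOf_singleton (ψ' q))
    rw [e3, hsplit', add_comm]
  -- Phase 2
  obtain ⟨L, ⟨hhead, hchain, Fe, hFe, hFec⟩, hwide⟩ := hd1
  set tr2 : Finset Pt → Finset Pt :=
    fun A => (A.erase x).image ψ ∪ (if x ∈ A then P'.image ψ' else ∅) with htr2
  have hmem2 : ∀ (A : Finset Pt) (z : Pt), z ∈ tr2 A ↔
      ((∃ p, p ∈ A ∧ p ≠ x ∧ ψ p = z) ∨ (x ∈ A ∧ ∃ q ∈ P', ψ' q = z)) := by
    intro A z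
    constructor
    · intro hz
      rcases Finset.mem_union.1 hz with h | h
      · obtain ⟨p, hp, rfl⟩ := Finset.mem_image.1 h
        have hp' := Finset.mem_erase.1 hp
        exact Or.inl ⟨p, hp'.2, hp'.1, rfl⟩
      · by_cases hxA : x ∈ A
        · rw [if_pos hxA] at h
          obtain ⟨q, hq, rfl⟩ := Finset.mem_image.1 h
          exact Or.inr ⟨hxA, q, hq, rfl⟩
        · rw [if_neg hxA] at h
          exact absurd h (Finset.notMem_empty z)
    · intro hz
      rcases hz with ⟨p, hpA, hpx, rfl⟩ | ⟨hxA, q, hq, rfl⟩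
      · exact Finset.mem_union_left _
          (Finset.mem_image_of_mem ψ (Finset.mem_erase.2 ⟨hpx, hpA⟩))
      · apply Finset.mem_union_right
        rw [if_pos hxA]
        exact Finset.mem_image_of_mem ψ' hq
  have hU2 : ∀ A B : Finset Pt, A ⊆ P → B ⊆ P → tr2 (A ∪ B) = tr2 A ∪ tr2 B := by
    intro A B _ _
    ext z
    constructor
    · intro hz
      rcases (hmem2 _ z).1 hz with ⟨p, hpAB, hpx, rfl⟩ | ⟨hxAB, q, hq, rfl⟩
      · rcases Finset.mem_union.1 hpAB with h | h
        · exact Finset.mem_union_left _ ((hmem2 A _).2 (Or.inl ⟨p, h, hpx, rfl⟩))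
        · exact Finset.mem_union_right _ ((hmem2 B _).2 (Or.inl ⟨p, h, hpx, rfl⟩))
      · rcases Finset.mem_union.1 hxAB with h | h
        · exact Finset.mem_union_left _ ((hmem2 A _).2 (Or.inr ⟨h, q, hq, rfl⟩))
        · exact Finset.mem_union_right _ ((hmem2 B _).2 (Or.inr ⟨h, q, hq, rfl⟩))
    · intro hz
      rcases Finset.mem_union.1 hz with h | h
      · rcases (hmem2 A z).1 h with ⟨p, hpA, hpx, rfl⟩ | ⟨hxA, q, hq, rfl⟩
        · exact (hmem2 _ _).2 (Or.inl ⟨p, Finset.mem_union_left _ hpA, hpx, rfl⟩)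
        · exact (hmem2 _ _).2 (Or.inr ⟨Finset.mem_union_left _ hxA, q, hq, rfl⟩)
      · rcases (hmem2 B z).1 h with ⟨p, hpB, hpx, rfl⟩ | ⟨hxB, q, hq, rfl⟩
        · exact (hmem2 _ _).2 (Or.inl ⟨p, Finset.mem_union_right _ hpB, hpx, rfl⟩)
        · exact (hmem2 _ _).2 (Or.inr ⟨Finset.mem_union_right _ hxB, q, hq, rfl⟩)
  have pairle : ∀ A B : Finset Pt, A ⊆ P → B ⊆ P → ∀ z ∈ tr2 A, ∀ w ∈ tr2 B, ∀ α : Fin 2,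
      coordPt α z ≤ coordPt α w → ∃ a ∈ A, ∃ b ∈ B, coordPt α a ≤ coordPt α b := by
    intro A B hAP hBP z hz w hw α hle
    rw [hmem2] at hz hw
    rcases hz with ⟨p, hpA, hpx, rfl⟩ | ⟨hxA, q, hq, rfl⟩ <;>
      rcases hw with ⟨p2, hp2B, hp2x, rfl⟩ | ⟨hxB, q2, hq2, rfl⟩
    · refine ⟨p, hpA, p2, hp2B, ?_⟩
      have hpe : p ∈ P.erase x := Finset.mem_erase.2 ⟨hpx, hAP hpA⟩
      have hp2e : p2 ∈ P.erase x := Finset.mem_erase.2 ⟨hp2x, hBP hp2B⟩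
      by_contra hc
      push_neg at hc
      have := (hordψ p2 hp2e p hpe α).2 hc
      omega
    · refine ⟨p, hpA, x, hxB, ?_⟩
      have hpe : p ∈ P.erase x := Finset.mem_erase.2 ⟨hpx, hAP hpA⟩
      by_contra hc
      push_neg at hc
      have := (hmix p hpe q2 hq2 α).2.2 hc
      omega
    · refine ⟨x, hxA, p2, hp2B, ?_⟩
      have hp2e : p2 ∈ P.erase x := Finset.mem_erase.2 ⟨hp2x, hBP hp2B⟩
      by_contra hc
      push_neg at hc
      have := (hmix p2 hp2e q hq α).1.2 hc
      omega
    · exact ⟨x, hxA, x, hxB, le_refl _⟩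
  have hV2 : ∀ A B : Finset Pt, A ⊆ P → B ⊆ P → A.Nonempty → B.Nonempty →
      (tr2 A).Nonempty → (tr2 B).Nonempty → ∀ α,
      rviews α (boxOf (tr2 A)) (boxOf (tr2 B)) → rviews α (boxOf A) (boxOf B) := by
    intro A B hAP hBP hAne hBne htA htB α hview
    rw [views_iff_exists htA htB α] at hview
    obtain ⟨⟨a, ha, b, hb, hab⟩, ⟨b', hb', a', ha', hba⟩⟩ := hview
    rw [views_iff_exists hAne hBne α]
    exact ⟨pairle A B hAP hBP a ha b hb α hab, pairle B A hBP hAP b' hb' a' ha' α hba⟩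
  obtain ⟨M2, Gf2, hM2chain, hM2head, hM2last, hL2last, hGf2inv, hM2wide⟩ :=
    lift_decomp (P := P) (E := (0 : Fam)) hU2 hV2 (by simp) (by simp) L hchain
      (P.val.map (fun p => ({p} : Finset Pt))) (ginv_init P)
      (by rw [hhead, famOf_init]) hwide
  have hGf2eq : Gf2 = {P} := by
    apply gf_eq hGf2inv
    rw [hL2last] at hFe
    have : famOf Gf2 = Fe := by simpa using hFe
    rw [this]
    exact hFec
  rw [hGf2eq] at hM2last
  -- head of phase 2 equals the phase boundary value
  have htx : tr2 {x} = P'.image ψ' := by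
    rw [htr2]
    simp only []
    rw [Finset.erase_singleton, Finset.image_empty,
      if_pos (Finset.mem_singleton_self x), Finset.empty_union]
  have htp : ∀ p ∈ (P.erase x).val, tr2 {p} = {ψ p} := by
    intro p hp
    have hpx : p ≠ x := (Finset.mem_erase.1 (Finset.mem_def.2 hp)).1
    rw [htr2]
    simp only []
    have h1 : ({p} : Finset Pt).erase x = {p} :=
      Finset.erase_eq_of_notMem (by rw [Finset.mem_singleton]; exact fun h => hpx h.symm)
    rw [h1, Finset.image_singleton,
      if_neg (by rw [Finset.mem_singleton]; exact fun h => hpx h.symm), Finset.union_empty]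
  have hPval : P.val = x ::ₘ (P.erase x).val := by
    rw [Finset.erase_val]
    exact (Multiset.cons_erase hx).symm
  have hhead2 : tfam tr2 0 (P.val.map (fun p => ({p} : Finset Pt))) =
      boxOf (P'.image ψ') ::ₘ E1 := by
    rw [tfam, add_zero, hPval, Multiset.map_cons, Multiset.map_cons, htx, Multiset.map_map]
    have e1 : Multiset.map (tr2 ∘ fun p => ({p} : Finset Pt)) (P.erase x).val =
        Multiset.map (fun p => ({ψ p} : Finset Pt)) (P.erase x).val :=
      Multiset.map_congr rfl (fun p hp => htp p hp)
    rw [e1, Multiset.filter_cons_of_pos _ (hP'ne.image ψ')]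
    have e2 : Multiset.filter (fun A : Finset Pt => A.Nonempty)
        (Multiset.map (fun p => ({ψ p} : Finset Pt)) (P.erase x).val) =
        Multiset.map (fun p => ({ψ p} : Finset Pt)) (P.erase x).val := by
      rw [Multiset.filter_eq_self]
      intro A hA
      obtain ⟨p, _, rfl⟩ := Multiset.mem_map.1 hA
      exact Finset.singleton_nonempty _
    rw [e2, Multiset.map_cons, Multiset.map_map]
    have e3 : Multiset.map (boxOf ∘ fun p => ({ψ p} : Finset Pt)) (P.erase x).val = E1 := by
      rw [hE1def]
      exact Multiset.map_congr rfl (fun p _ => boxOf_singleton (ψ p))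
    rw [e3]
  have hcard2 : Multiset.card (tfam tr2 0 {P}) = 1 := by
    rw [tfam, add_zero, Multiset.map_singleton]
    have htPne : (tr2 P).Nonempty := by
      obtain ⟨q0, hq0⟩ := hP'ne
      exact ⟨ψ' q0, (hmem2 P (ψ' q0)).2 (Or.inr ⟨hx, q0, hq0, rfl⟩)⟩
    have hfe : Multiset.filter (fun A : Finset Pt => A.Nonempty) {tr2 P} = {tr2 P} := by
      rw [Multiset.filter_eq_self]
      intro A hA
      rw [Multiset.mem_singleton.1 hA]
      exact htPne
    rw [hfe, Multiset.map_singleton]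
    rfl
  -- glue the two phases
  have hM2ne : M2 ≠ [] := by
    intro h0
    rw [h0] at hM2head
    simp at hM2head
  obtain ⟨a1, t1, rfl⟩ : ∃ a1 t1, M1 = a1 :: t1 := by
    rcases M1 with _ | ⟨a1, t1⟩
    · simp at hM1head
    · exact ⟨a1, t1, rfl⟩
  have ha1 : a1 = Multiset.map ptRect P''.val := by
    have h := hM1head
    rw [List.head?_cons, Option.some.injEq] at h
    rw [h, hhead1]
  have hchainapp : List.Chain' (fun F F' => F = F' ∨ MergeStep F F') ((a1 :: t1) ++ M2) := by
    apply List.IsChain.append hM1chain hM2chain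
    intro y hy z hz
    left
    have hy' : y = tfam tr1 E1 {P'} := by
      rw [hM1last] at hy
      exact (Option.mem_some_iff.1 hy).symm
    have hz' : z = tfam tr2 0 (P.val.map (fun p => ({p} : Finset Pt))) := by
      rw [hM2head] at hz
      exact (Option.mem_some_iff.1 hz).symm
    rw [hy', hz', hlast1, hhead2]
  refine ⟨dd ((a1 :: t1) ++ M2), ⟨?_, dd_chain _ hchainapp, tfam tr2 0 {P}, ?_, hcard2⟩, ?_⟩
  · rw [dd_head?, List.cons_append, List.head?_cons, ha1]
  · rw [dd_getLast?, List.getLast?_append, hM2last]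
    simp
  · intro F hF
    have hmem := dd_subset _ F hF
    rcases List.mem_append.1 hmem with h1 | h2
    · exact hM1wide F h1
    · exact hM2wide F h2


/-- w(π[x ← π']) = max(w(π), w(π')). -/
theorem stmt2 (P P' P'' : Finset Pt) (x : Pt) (hx : x ∈ P) (hP'ne : P'.Nonempty)
    (hP : GenPos P) (hP' : GenPos P') (hP'' : GenPos P'')
    (hsub : IsSubstitution P x P' P'') :
    permWidth P'' = max (permWidth P) (permWidth P') := by
  classical
  obtain ⟨ψ, ψ', hinjψ, hinjψ', hψP'', hψ'P'', hsurj, hordψ, hordψ', hmix⟩ := hsub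
  have hPne : P.Nonempty := ⟨x, hx⟩
  obtain ⟨q0, hq0⟩ := hP'ne
  have hP'ne : P'.Nonempty := ⟨q0, hq0⟩
  have hP''ne : P''.Nonempty := ⟨ψ' q0, hψ'P'' q0 hq0⟩
  set m := max (permWidth P) (permWidth P') with hm
  have hwP : HasWidthLE P (permWidth P) := hasWidthLE_permWidth hPne
  have hwP' : HasWidthLE P' (permWidth P') := hasWidthLE_permWidth hP'ne
  have hm1 : 1 ≤ m := le_trans (permWidth_pos hPne) (le_max_left _ _)
  have hub : HasWidthLE P'' m :=
    hasWidthLE_subst hx hP'ne hP hP'' hinjψ hinjψ' hψP'' hψ'P'' hsurj hordψ hordψ' hmix hm1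
      (hasWidthLE_mono (le_max_left _ _) hwP) (hasWidthLE_mono (le_max_right _ _) hwP')
  have hle1 : permWidth P'' ≤ m := Nat.sInf_le hub
  have hwP'' : HasWidthLE P'' (permWidth P'') := hasWidthLE_permWidth hP''ne
  have h2 : HasWidthLE P' (permWidth P'') :=
    hasWidthLE_subpattern hP'ne hψ'P'' hinjψ'
      (fun s hs t ht α => (hordψ' s hs t ht α).symm) hwP''
  set φ : Pt → Pt := fun p => if p = x then ψ' q0 else ψ p with hφ
  have hφmap : ∀ p ∈ P, φ p ∈ P'' := by
    intro p hp
    by_cases hpx : p = x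
    · rw [hφ]
      simp only [if_pos hpx]
      exact hψ'P'' q0 hq0
    · rw [hφ]
      simp only [if_neg hpx]
      exact hψP'' p (Finset.mem_erase.2 ⟨hpx, hp⟩)
  have hcoordne : ∀ p ∈ P.erase x, ∀ α : Fin 2, coordPt α (ψ p) ≠ coordPt α (ψ' q0) := by
    intro p hp α
    have hc := genpos_coord_ne hP (Finset.mem_of_mem_erase hp) hx (Finset.mem_erase.1 hp).1 α
    rcases lt_or_gt_of_ne hc with hlt | hgt
    · have := (hmix p hp q0 hq0 α).1.2 hlt
      omega
    · have := (hmix p hp q0 hq0 α).2.2 hgt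
      omega
  have hφinj : Set.InjOn φ ↑P := by
    intro a ha b hb he
    have haP : a ∈ P := Finset.mem_coe.1 ha
    have hbP : b ∈ P := Finset.mem_coe.1 hb
    by_cases hax : a = x <;> by_cases hbx : b = x
    · rw [hax, hbx]
    · exfalso
      have hbe : b ∈ P.erase x := Finset.mem_erase.2 ⟨hbx, hbP⟩
      rw [hφ] at he
      simp only [if_pos hax, if_neg hbx] at he
      exact hcoordne b hbe 0 (by rw [he])
    · exfalso
      have hae : a ∈ P.erase x := Finset.mem_erase.2 ⟨hax, haP⟩
      rw [hφ] at he
      simp only [if_neg hax, if_pos hbx] at he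
      exact hcoordne a hae 0 (by rw [he])
    · have hae : a ∈ P.erase x := Finset.mem_erase.2 ⟨hax, haP⟩
      have hbe : b ∈ P.erase x := Finset.mem_erase.2 ⟨hbx, hbP⟩
      rw [hφ] at he
      simp only [if_neg hax, if_neg hbx] at he
      exact hinjψ (Finset.mem_coe.2 hae) (Finset.mem_coe.2 hbe) he
  have hφord : ∀ s ∈ P, ∀ t ∈ P, ∀ α : Fin 2,
      coordPt α s < coordPt α t ↔ coordPt α (φ s) < coordPt α (φ t) := by
    intro s hs t ht α
    by_cases hsx : s = x <;> by_cases htx : t = x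
    · rw [hφ]
      simp only [if_pos hsx, if_pos htx, hsx, htx]
      exact iff_of_false (lt_irrefl _) (lt_irrefl _)
    · have hte : t ∈ P.erase x := Finset.mem_erase.2 ⟨htx, ht⟩
      rw [hφ]
      simp only [if_pos hsx, if_neg htx, hsx]
      exact ((hmix t hte q0 hq0 α).2).symm
    · have hse : s ∈ P.erase x := Finset.mem_erase.2 ⟨hsx, hs⟩
      rw [hφ]
      simp only [if_neg hsx, if_pos htx, htx]
      exact ((hmix s hse q0 hq0 α).1).symm
    · have hse : s ∈ P.erase x := Finset.mem_erase.2 ⟨hsx, hs⟩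
      have hte : t ∈ P.erase x := Finset.mem_erase.2 ⟨htx, ht⟩
      rw [hφ]
      simp only [if_neg hsx, if_neg htx]
      exact (hordψ s hse t hte α).symm
  have h1 : HasWidthLE P (permWidth P'') :=
    hasWidthLE_subpattern hPne hφmap hφinj hφord hwP''
  have hge1 : permWidth P ≤ permWidth P'' := Nat.sInf_le h1
  have hge2 : permWidth P' ≤ permWidth P'' := Nat.sInf_le h2
  exact le_antisymm hle1 (max_le hge1 hge2)
end

section
/- A permutation is separable if and only if its width is at most 1. -/
/-- The pattern 2413 as a point set. -/
def pat2413 : Finset Pt := {(1,2),(2,4),(3,1),(4,3)}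

/-- The pattern 3142 as a point set. -/
def pat3142 : Finset Pt := {(1,3),(2,1),(3,4),(4,2)}

/-- A permutation is separable iff it avoids 2413 and 3142. -/
def Separable (P : Finset Pt) : Prop := ¬ Subpattern pat2413 P ∧ ¬ Subpattern pat3142 P

-- ==================== auxiliary development ====================
section Aux

/-- Containment of a point in a rectangle, coordinatewise. -/
def CPt (R : Rect) (p : Pt) : Prop :=
  ∀ α : Fin 2, (rproj α R).1 ≤ coordPt α p ∧ coordPt α p ≤ (rproj α R).2

lemma rproj_zero (R : Rect) : rproj 0 R = R.1 := rfl
lemma rproj_one (R : Rect) : rproj 1 R = R.2 := rfl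
lemma coordPt_zero (p : Pt) : coordPt 0 p = p.1 := rfl
lemma coordPt_one (p : Pt) : coordPt 1 p = p.2 := rfl

lemma CPt_iff (R : Rect) (p : Pt) :
    CPt R p ↔ (R.1.1 ≤ p.1 ∧ p.1 ≤ R.1.2) ∧ (R.2.1 ≤ p.2 ∧ p.2 ≤ R.2.2) := by
  constructor
  · intro h; exact ⟨h 0, h 1⟩
  · rintro ⟨h0, h1⟩ α
    fin_cases α
    · exact h0
    · exact h1

lemma CPt_ptRect (p : Pt) : CPt (ptRect p) p := by
  rw [CPt_iff]; simp [ptRect]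

lemma CPt_ptRect_iff (q p : Pt) : CPt (ptRect q) p ↔ p = q := by
  rw [CPt_iff]
  constructor
  · rintro ⟨⟨h1, h2⟩, ⟨h3, h4⟩⟩
    simp [ptRect] at h1 h2 h3 h4
    exact Prod.ext (le_antisymm h2 h1) (le_antisymm h4 h3)
  · rintro rfl; exact (CPt_iff _ _).1 (CPt_ptRect _)

lemma CPt_bbox_left {R1 : Rect} (R2 : Rect) {p : Pt} (h : CPt R1 p) : CPt (bbox R1 R2) p := by
  rw [CPt_iff] at h ⊢
  simp only [bbox]
  omega

lemma CPt_bbox_right (R1 : Rect) {R2 : Rect} {p : Pt} (h : CPt R2 p) : CPt (bbox R1 R2) p := by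
  rw [CPt_iff] at h ⊢
  simp only [bbox]
  omega

lemma ivOverlap_of_common {I J : Iv} {c : ℕ} (h1 : I.1 ≤ c) (h2 : c ≤ I.2)
    (h3 : J.1 ≤ c) (h4 : c ≤ J.2) : ivOverlap I J :=
  ⟨le_trans h1 h4, le_trans h3 h2⟩

lemma rviews_of_common {α : Fin 2} {R R' : Rect} {p q : Pt}
    (h : CPt R p) (h' : CPt R' q) (hc : coordPt α p = coordPt α q) : rviews α R R' := by
  obtain ⟨a1, a2⟩ := h α
  obtain ⟨b1, b2⟩ := h' α
  rw [hc] at a1 a2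
  exact ivOverlap_of_common a1 a2 b1 b2

/-- A 1-wide family: membership formulation. -/
lemma wide_one_iff (F : Fam) :
    Wide 1 F ↔ ∀ R ∈ F, ∀ R' ∈ F.erase R, ∀ α : Fin 2, ¬ rviews α R R' := by
  constructor
  · intro h R hR R' hR' α hv
    have := h R hR α
    rw [Nat.lt_one_iff, Multiset.card_eq_zero, Multiset.filter_eq_nil] at this
    exact this R' hR' hv
  · intro h R hR α
    rw [Nat.lt_one_iff, Multiset.card_eq_zero, Multiset.filter_eq_nil]
    exact fun R' hR' hv => h R hR R' hR' α hv

lemma wide_one_add {S F : Fam} (hS : Wide 1 S) (hF : Wide 1 F)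
    (hSF : ∀ R ∈ S, ∀ R' ∈ F, ∀ α : Fin 2, ¬ rviews α R R' ∧ ¬ rviews α R' R) :
    Wide 1 (S + F) := by
  rw [wide_one_iff] at hS hF ⊢
  intro R hR R' hR' α hv
  have hR'mem : R' ∈ S + F := Multiset.mem_of_mem_erase hR'
  rcases Multiset.mem_add.1 hR with hRS | hRF
  · rcases Multiset.mem_add.1 hR'mem with hR'S | hR'F
    · -- both in S
      by_cases he : R' = R
      · subst he
        -- multiplicity ≥ 2
        have hc : 1 ≤ Multiset.count R' ((S + F).erase R') := Multiset.one_le_count_iff_mem.2 hR'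
        rw [Multiset.count_erase_self, Multiset.count_add] at hc
        by_cases hRF' : R' ∈ F
        · exact (hSF R' hRS R' hRF' α).1 hv
        · have : Multiset.count R' F = 0 := Multiset.count_eq_zero.2 hRF'
          have h2 : 2 ≤ Multiset.count R' S := by omega
          have : R' ∈ S.erase R' := by
            rw [← Multiset.one_le_count_iff_mem, Multiset.count_erase_self]; omega
          exact hS R' hR'S R' this α hv
      · exact hS R hRS R' ((Multiset.mem_erase_of_ne he).2 hR'S) α hv
    · exact (hSF R hRS R' hR'F α).1 hv
  · rcases Multiset.mem_add.1 hR'mem with hR'S | hR'F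
    · exact (hSF R' hR'S R hRF α).2 hv
    · by_cases he : R' = R
      · subst he
        have hc : 1 ≤ Multiset.count R' ((S + F).erase R') := Multiset.one_le_count_iff_mem.2 hR'
        rw [Multiset.count_erase_self, Multiset.count_add] at hc
        by_cases hRS' : R' ∈ S
        · exact (hSF R' hRS' R' hRF α).1 hv
        · have : Multiset.count R' S = 0 := Multiset.count_eq_zero.2 hRS'
          have : R' ∈ F.erase R' := by
            rw [← Multiset.one_le_count_iff_mem, Multiset.count_erase_self]; omega
          exact hF R' hR'F R' this α hv
      · exact hF R hRF R' ((Multiset.mem_erase_of_ne he).2 hR'F) α hv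

lemma mergeStep_add (S : Fam) {F F' : Fam} (h : MergeStep F F') : MergeStep (S + F) (S + F') := by
  obtain ⟨R1, R2, h1, h2, h3⟩ := h
  refine ⟨R1, R2, Multiset.mem_add.2 (Or.inr h1), ?_, ?_⟩
  · rw [Multiset.erase_add_right_pos _ h1]
    exact Multiset.mem_add.2 (Or.inr h2)
  · rw [Multiset.erase_add_right_pos _ h1, Multiset.erase_add_right_pos _ h2, h3]
    simp

end Aux
-- ==================== reverse direction ====================
section Reverse

/-- Invariant along a 1-wide decomposition: every point is covered, and no
rectangle contains two of the four designated points. -/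
def Inv4 (P : Finset Pt) (pts : Fin 4 → Pt) (F : Fam) : Prop :=
  (∀ p ∈ P, ∃ R ∈ F, CPt R p) ∧
  ∀ R ∈ F, ∀ i j : Fin 4, i ≠ j → CPt R (pts i) → CPt R (pts j) → False

lemma inv_step {P : Finset Pt} {pts : Fin 4 → Pt} (hmem : ∀ i, pts i ∈ P)
    (hbtw : ∀ i j : Fin 4, i ≠ j → ∃ k : Fin 4, k ≠ i ∧ k ≠ j ∧
      ∃ α : Fin 2, Between α (pts i) (pts j) (pts k))
    {F F' : Fam} (hms : MergeStep F F') (hI : Inv4 P pts F) (hW : Wide 1 F') :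
    Inv4 P pts F' := by
  obtain ⟨R1, R2, hR1, hR2, rfl⟩ := hms
  obtain ⟨hcov, htwo⟩ := hI
  have hR2F : R2 ∈ F := Multiset.mem_of_mem_erase hR2
  set rest := (F.erase R1).erase R2 with hrest
  have memrest : ∀ R : Rect, R ∈ F → R ≠ R1 → R ≠ R2 → R ∈ rest := by
    intro R hR h1 h2
    exact (Multiset.mem_erase_of_ne h2).2 ((Multiset.mem_erase_of_ne h1).2 hR)
  have restF : ∀ R : Rect, R ∈ rest → R ∈ F := fun R hR =>
    Multiset.mem_of_mem_erase (Multiset.mem_of_mem_erase hR)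
  constructor
  · intro p hp
    obtain ⟨R, hRF, hRp⟩ := hcov p hp
    by_cases h1 : CPt R1 p
    · exact ⟨bbox R1 R2, Multiset.mem_cons_self _ _, CPt_bbox_left _ h1⟩
    by_cases h2 : CPt R2 p
    · exact ⟨bbox R1 R2, Multiset.mem_cons_self _ _, CPt_bbox_right _ h2⟩
    have hne1 : R ≠ R1 := fun h => h1 (h ▸ hRp)
    have hne2 : R ≠ R2 := fun h => h2 (h ▸ hRp)
    exact ⟨R, Multiset.mem_cons_of_mem (memrest R hRF hne1 hne2), hRp⟩
  · intro R hR i j hij hi hj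
    rcases Multiset.mem_cons.1 hR with rfl | hRrest
    · -- R is the new bounding box
      obtain ⟨k, hki, hkj, α, hbet⟩ := hbtw i j hij
      obtain ⟨Ri, hRiF, hRi⟩ := hcov (pts i) (hmem i)
      obtain ⟨Rj, hRjF, hRj⟩ := hcov (pts j) (hmem j)
      obtain ⟨Rk, hRkF, hRk⟩ := hcov (pts k) (hmem k)
      have dij : Ri ≠ Rj := fun h => htwo Ri hRiF i j hij hRi (h ▸ hRj)
      have dik : Ri ≠ Rk := fun h => htwo Ri hRiF i k (Ne.symm hki) hRi (h ▸ hRk)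
      have djk : Rj ≠ Rk := fun h => htwo Rj hRjF j k (Ne.symm hkj) hRj (h ▸ hRk)
      have pig : (Ri ≠ R1 ∧ Ri ≠ R2) ∨ (Rj ≠ R1 ∧ Rj ≠ R2) ∨ (Rk ≠ R1 ∧ Rk ≠ R2) := by
        rcases eq_or_ne Ri R1 with ei1 | ei1
        · rcases eq_or_ne Rj R1 with ej1 | ej1
          · exact absurd (ei1.trans ej1.symm) dij
          · rcases eq_or_ne Rj R2 with ej2 | ej2
            · rcases eq_or_ne Rk R1 with ek1 | ek1
              · exact absurd (ei1.trans ek1.symm) dik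
              · rcases eq_or_ne Rk R2 with ek2 | ek2
                · exact absurd (ej2.trans ek2.symm) djk
                · exact Or.inr (Or.inr ⟨ek1, ek2⟩)
            · exact Or.inr (Or.inl ⟨ej1, ej2⟩)
        · rcases eq_or_ne Ri R2 with ei2 | ei2
          · rcases eq_or_ne Rj R2 with ej2 | ej2
            · exact absurd (ei2.trans ej2.symm) dij
            · rcases eq_or_ne Rj R1 with ej1 | ej1
              · rcases eq_or_ne Rk R1 with ek1 | ek1
                · exact absurd (ej1.trans ek1.symm) djk
                · rcases eq_or_ne Rk R2 with ek2 | ek2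
                  · exact absurd (ei2.trans ek2.symm) dik
                  · exact Or.inr (Or.inr ⟨ek1, ek2⟩)
              · exact Or.inr (Or.inl ⟨ej1, ej2⟩)
          · exact Or.inl ⟨ei1, ei2⟩
      have hWmem := (wide_one_iff _).1 hW (bbox R1 R2) (Multiset.mem_cons_self _ _)
      rcases pig with ⟨h1, h2⟩ | ⟨h1, h2⟩ | ⟨h1, h2⟩
      · exact hWmem Ri (by rw [Multiset.erase_cons_head]; exact memrest Ri hRiF h1 h2) 0
          (rviews_of_common hi hRi rfl)
      · exact hWmem Rj (by rw [Multiset.erase_cons_head]; exact memrest Rj hRjF h1 h2) 0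
          (rviews_of_common hj hRj rfl)
      · refine hWmem Rk (by rw [Multiset.erase_cons_head]; exact memrest Rk hRkF h1 h2) α ?_
        obtain ⟨hb1, hb2⟩ := hbet
        have h1' := hi α
        have h2' := hj α
        have h3' := hRk α
        exact ⟨by omega, by omega⟩
    · exact htwo R (restF R hRrest) i j hij hi hj

lemma inv_all {P : Finset Pt} {pts : Fin 4 → Pt} (hmem : ∀ i, pts i ∈ P)
    (hbtw : ∀ i j : Fin 4, i ≠ j → ∃ k : Fin 4, k ≠ i ∧ k ≠ j ∧
      ∃ α : Fin 2, Between α (pts i) (pts j) (pts k)) :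
    ∀ L : List Fam, List.Chain' MergeStep L → (∀ F ∈ L, Wide 1 F) →
      (∀ F0, L.head? = some F0 → Inv4 P pts F0) → ∀ F ∈ L, Inv4 P pts F := by
  intro L
  induction L with
  | nil => intro _ _ _ F hF; simp at hF
  | cons F0 rest ih =>
    intro hch hw h0 F hF
    have hI0 : Inv4 P pts F0 := h0 F0 rfl
    rcases List.mem_cons.1 hF with rfl | hFrest
    · exact hI0
    · cases rest with
      | nil => simp at hFrest
      | cons F1 rest' =>
        unfold List.Chain' at hch
        rw [List.isChain_cons_cons] at hch
        refine ih hch.2 (fun G hG => hw G (List.mem_cons_of_mem _ hG)) ?_ F hFrest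
        intro F0' hF0'
        have he : F1 = F0' := by simpa using hF0'
        subst he
        exact inv_step hmem hbtw hch.1 hI0 (hw F1 (by simp))

lemma no_four {P : Finset Pt} (pts : Fin 4 → Pt) (hW1 : HasWidthLE P 1)
    (hmem : ∀ i, pts i ∈ P)
    (hxlt : ∀ i j : Fin 4, i < j → (pts i).1 < (pts j).1)
    (hbtw : ∀ i j : Fin 4, i ≠ j → ∃ k : Fin 4, k ≠ i ∧ k ≠ j ∧
      ∃ α : Fin 2, Between α (pts i) (pts j) (pts k)) : False := by
  obtain ⟨L, ⟨hhead, hchain, G, hlast, hcard⟩, hwide⟩ := hW1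
  have hinj : ∀ i j : Fin 4, i ≠ j → pts i ≠ pts j := by
    intro i j hij h
    rcases lt_or_gt_of_ne hij with hlt | hlt
    · exact absurd (congrArg Prod.fst h) (Nat.ne_of_lt (hxlt i j hlt))
    · exact absurd (congrArg Prod.fst h).symm (Nat.ne_of_lt (hxlt j i hlt))
  have hall : ∀ F ∈ L, Inv4 P pts F := by
    refine inv_all hmem hbtw L hchain hwide ?_
    intro F0 hF0
    rw [hhead] at hF0
    injection hF0 with hF0
    subst hF0
    constructor
    · intro p hp
      exact ⟨ptRect p, Multiset.mem_map_of_mem _ hp, CPt_ptRect p⟩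
    · intro R hR i j hij hi hj
      obtain ⟨q, _, rfl⟩ := Multiset.mem_map.1 hR
      rw [CPt_ptRect_iff] at hi hj
      exact hinj i j hij (hi.trans hj.symm)
  have hGL : G ∈ L := by
    obtain ⟨h, he⟩ := List.mem_getLast?_eq_getLast (Option.mem_def.2 hlast)
    rw [he]; exact List.getLast_mem h
  obtain ⟨R, hGR⟩ := Multiset.card_eq_one.1 hcard
  obtain ⟨hcov, htwo⟩ := hall G hGL
  obtain ⟨R0, hR0, h0⟩ := hcov (pts 0) (hmem 0)
  obtain ⟨R1', hR1', h1⟩ := hcov (pts 1) (hmem 1)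
  rw [hGR, Multiset.mem_singleton] at hR0 hR1'
  exact htwo R (hGR ▸ Multiset.mem_singleton_self R) 0 1 (by decide) (hR0 ▸ h0) (hR1' ▸ h1)

end Reverse
-- ==================== pattern instantiation ====================
section Patterns

lemma btw_table {a b c d : Pt}
    (hx1 : a.1 < b.1) (hx2 : b.1 < c.1) (hx3 : c.1 < d.1)
    (hy : (c.2 < a.2 ∧ a.2 < d.2 ∧ d.2 < b.2) ∨ (b.2 < d.2 ∧ d.2 < a.2 ∧ a.2 < c.2)) :
    ∀ i j : Fin 4, i ≠ j → ∃ k : Fin 4, k ≠ i ∧ k ≠ j ∧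
      ∃ α : Fin 2, Between α (![a,b,c,d] i) (![a,b,c,d] j) (![a,b,c,d] k) := by
  have Y : ∀ u v w : ℕ, min u v < w → w < max u v →
      min u v < w ∧ w < max u v := fun _ _ _ h1 h2 => ⟨h1, h2⟩
  intro i j hij
  fin_cases i <;> fin_cases j
  · exact absurd rfl hij
  · exact ⟨3, by decide, by decide, 1,
      show min a.2 b.2 < d.2 ∧ d.2 < max a.2 b.2 by rcases hy with ⟨h1,h2,h3⟩|⟨h1,h2,h3⟩ <;>
        exact ⟨by omega, by omega⟩⟩
  · exact ⟨1, by decide, by decide, 0,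
      show min a.1 c.1 < b.1 ∧ b.1 < max a.1 c.1 by exact ⟨by omega, by omega⟩⟩
  · exact ⟨1, by decide, by decide, 0,
      show min a.1 d.1 < b.1 ∧ b.1 < max a.1 d.1 by exact ⟨by omega, by omega⟩⟩
  · exact ⟨3, by decide, by decide, 1,
      show min b.2 a.2 < d.2 ∧ d.2 < max b.2 a.2 by rcases hy with ⟨h1,h2,h3⟩|⟨h1,h2,h3⟩ <;>
        exact ⟨by omega, by omega⟩⟩
  · exact absurd rfl hij
  · exact ⟨3, by decide, by decide, 1,
      show min b.2 c.2 < d.2 ∧ d.2 < max b.2 c.2 by rcases hy with ⟨h1,h2,h3⟩|⟨h1,h2,h3⟩ <;>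
        exact ⟨by omega, by omega⟩⟩
  · exact ⟨2, by decide, by decide, 0,
      show min b.1 d.1 < c.1 ∧ c.1 < max b.1 d.1 by exact ⟨by omega, by omega⟩⟩
  · exact ⟨1, by decide, by decide, 0,
      show min c.1 a.1 < b.1 ∧ b.1 < max c.1 a.1 by exact ⟨by omega, by omega⟩⟩
  · exact ⟨3, by decide, by decide, 1,
      show min c.2 b.2 < d.2 ∧ d.2 < max c.2 b.2 by rcases hy with ⟨h1,h2,h3⟩|⟨h1,h2,h3⟩ <;>
        exact ⟨by omega, by omega⟩⟩
  · exact absurd rfl hij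
  · exact ⟨0, by decide, by decide, 1,
      show min c.2 d.2 < a.2 ∧ a.2 < max c.2 d.2 by rcases hy with ⟨h1,h2,h3⟩|⟨h1,h2,h3⟩ <;>
        exact ⟨by omega, by omega⟩⟩
  · exact ⟨1, by decide, by decide, 0,
      show min d.1 a.1 < b.1 ∧ b.1 < max d.1 a.1 by exact ⟨by omega, by omega⟩⟩
  · exact ⟨2, by decide, by decide, 0,
      show min d.1 b.1 < c.1 ∧ c.1 < max d.1 b.1 by exact ⟨by omega, by omega⟩⟩
  · exact ⟨0, by decide, by decide, 1,
      show min d.2 c.2 < a.2 ∧ a.2 < max d.2 c.2 by rcases hy with ⟨h1,h2,h3⟩|⟨h1,h2,h3⟩ <;>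
        exact ⟨by omega, by omega⟩⟩
  · exact absurd rfl hij

lemma xlt_table {a b c d : Pt}
    (hx1 : a.1 < b.1) (hx2 : b.1 < c.1) (hx3 : c.1 < d.1) :
    ∀ i j : Fin 4, i < j → (![a,b,c,d] i).1 < (![a,b,c,d] j).1 := by
  intro i j hij
  fin_cases i <;> fin_cases j
  · exact absurd hij (by decide)
  · show a.1 < b.1; omega
  · show a.1 < c.1; omega
  · show a.1 < d.1; omega
  · exact absurd hij (by decide)
  · exact absurd hij (by decide)
  · show b.1 < c.1; omega
  · show b.1 < d.1; omega
  · exact absurd hij (by decide)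
  · exact absurd hij (by decide)
  · exact absurd hij (by decide)
  · show c.1 < d.1; omega
  · exact absurd hij (by decide)
  · exact absurd hij (by decide)
  · exact absurd hij (by decide)
  · exact absurd hij (by decide)

lemma sep_of_width1 {P : Finset Pt} (hW1 : HasWidthLE P 1) : Separable P := by
  constructor
  · rintro ⟨φ, hinj, hmap, hord⟩
    have m1 : ((1,2) : Pt) ∈ pat2413 := by decide
    have m2 : ((2,4) : Pt) ∈ pat2413 := by decide
    have m3 : ((3,1) : Pt) ∈ pat2413 := by decide
    have m4 : ((4,3) : Pt) ∈ pat2413 := by decide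
    set a := φ (1,2); set b := φ (2,4); set c := φ (3,1); set d := φ (4,3)
    have hx1 : a.1 < b.1 := (hord _ m1 _ m2).1.mp (by norm_num)
    have hx2 : b.1 < c.1 := (hord _ m2 _ m3).1.mp (by norm_num)
    have hx3 : c.1 < d.1 := (hord _ m3 _ m4).1.mp (by norm_num)
    have hy1 : c.2 < a.2 := (hord _ m3 _ m1).2.mp (by norm_num)
    have hy2 : a.2 < d.2 := (hord _ m1 _ m4).2.mp (by norm_num)
    have hy3 : d.2 < b.2 := (hord _ m4 _ m2).2.mp (by norm_num)
    refine no_four ![a,b,c,d] hW1 ?_ (xlt_table hx1 hx2 hx3)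
      (btw_table hx1 hx2 hx3 (Or.inl ⟨hy1, hy2, hy3⟩))
    intro i
    fin_cases i
    · exact hmap _ m1
    · exact hmap _ m2
    · exact hmap _ m3
    · exact hmap _ m4
  · rintro ⟨φ, hinj, hmap, hord⟩
    have m1 : ((1,3) : Pt) ∈ pat3142 := by decide
    have m2 : ((2,1) : Pt) ∈ pat3142 := by decide
    have m3 : ((3,4) : Pt) ∈ pat3142 := by decide
    have m4 : ((4,2) : Pt) ∈ pat3142 := by decide
    set a := φ (1,3); set b := φ (2,1); set c := φ (3,4); set d := φ (4,2)
    have hx1 : a.1 < b.1 := (hord _ m1 _ m2).1.mp (by norm_num)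
    have hx2 : b.1 < c.1 := (hord _ m2 _ m3).1.mp (by norm_num)
    have hx3 : c.1 < d.1 := (hord _ m3 _ m4).1.mp (by norm_num)
    have hy1 : b.2 < d.2 := (hord _ m2 _ m4).2.mp (by norm_num)
    have hy2 : d.2 < a.2 := (hord _ m4 _ m1).2.mp (by norm_num)
    have hy3 : a.2 < c.2 := (hord _ m1 _ m3).2.mp (by norm_num)
    refine no_four ![a,b,c,d] hW1 ?_ (xlt_table hx1 hx2 hx3)
      (btw_table hx1 hx2 hx3 (Or.inr ⟨hy1, hy2, hy3⟩))
    intro i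
    fin_cases i
    · exact hmap _ m1
    · exact hmap _ m2
    · exact hmap _ m3
    · exact hmap _ m4

end Patterns
-- ==================== generic decompositions ====================
section Generic

lemma decomp_aux : ∀ (n : ℕ) (F : Fam), Multiset.card F = n + 1 →
    ∃ L : List Fam, L.head? = some F ∧ List.Chain' MergeStep L ∧
      (∃ G, L.getLast? = some G ∧ Multiset.card G = 1) ∧ ∀ G ∈ L, Multiset.card G ≤ n + 1 := by
  intro n
  induction n with
  | zero =>
    intro F hF
    exact ⟨[F], rfl, List.isChain_singleton F, ⟨F, rfl, hF⟩, by
      intro G hG; rw [List.mem_singleton] at hG; subst hG; omega⟩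
  | succ k ih =>
    intro F hF
    have h1 : ∃ R1, R1 ∈ F := Multiset.exists_mem_of_ne_zero (by
      intro h; rw [h] at hF; simp at hF)
    obtain ⟨R1, hR1⟩ := h1
    obtain ⟨F1, rfl⟩ := Multiset.exists_cons_of_mem hR1
    have h2 : ∃ R2, R2 ∈ F1 := Multiset.exists_mem_of_ne_zero (by
      intro h; rw [h] at hF; simp at hF)
    obtain ⟨R2, hR2⟩ := h2
    obtain ⟨F2, rfl⟩ := Multiset.exists_cons_of_mem hR2
    have hcard : Multiset.card (bbox R1 R2 ::ₘ F2) = k + 1 := by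
      simp at hF ⊢; omega
    obtain ⟨L', hhead', hchain', hlast', hbound'⟩ := ih _ hcard
    cases L' with
    | nil => simp at hhead'
    | cons F' t =>
      have hF' : F' = bbox R1 R2 ::ₘ F2 := by simpa using hhead'
      refine ⟨(R1 ::ₘ R2 ::ₘ F2) :: F' :: t, rfl, ?_, ?_, ?_⟩
      · unfold List.Chain'
        rw [List.isChain_cons_cons]
        refine ⟨⟨R1, R2, Multiset.mem_cons_self _ _, ?_, ?_⟩, hchain'⟩
        · rw [Multiset.erase_cons_head]; exact Multiset.mem_cons_self _ _
        · rw [Multiset.erase_cons_head, Multiset.erase_cons_head, hF']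
      · obtain ⟨G, hG, hGc⟩ := hlast'
        exact ⟨G, by rwa [List.getLast?_cons_cons], hGc⟩
      · intro G hG
        rcases List.mem_cons.1 hG with rfl | hG'
        · simp at hF ⊢; omega
        · exact le_trans (hbound' G hG') (by omega)

lemma hasWidth_mono {P : Finset Pt} {d d' : ℕ} (h : d ≤ d') (hw : HasWidthLE P d) :
    HasWidthLE P d' := by
  obtain ⟨L, hL, hW⟩ := hw
  exact ⟨L, hL, fun F hF R hR α => lt_of_lt_of_le (hW F hF R hR α) h⟩

lemma exists_width {P : Finset Pt} (hne : P.Nonempty) : HasWidthLE P P.card := by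
  have hc : Multiset.card (Multiset.map ptRect P.val) = (P.card - 1) + 1 := by
    rw [Multiset.card_map]
    have h0 := Finset.card_pos.2 hne
    have h1 : P.card = Multiset.card P.val := rfl
    omega
  obtain ⟨L, hhead, hchain, hlast, hbound⟩ := decomp_aux (P.card - 1) _ hc
  refine ⟨L, ⟨hhead, hchain, hlast⟩, ?_⟩
  intro F hF R hR α
  have hb := hbound F hF
  have h1 : Multiset.card (Multiset.filter (fun R' => rviews α R R') (F.erase R)) ≤
      Multiset.card (F.erase R) := Multiset.card_le_card (Multiset.filter_le _ _)
  have h2 : Multiset.card (F.erase R) = Multiset.card F - 1 := by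
    rw [Multiset.card_erase_of_mem hR]; rfl
  have := Finset.card_pos.2 hne
  omega

lemma sep_empty : Separable (∅ : Finset Pt) := by
  constructor
  · rintro ⟨φ, _, hmap, _⟩
    have := hmap (1,2) (by decide)
    simp at this
  · rintro ⟨φ, _, hmap, _⟩
    have := hmap (1,3) (by decide)
    simp at this

lemma width_empty : {d | HasWidthLE (∅ : Finset Pt) d} = ∅ := by
  ext d
  simp only [Set.mem_setOf_eq, Set.mem_empty_iff_false, iff_false]
  rintro ⟨L, ⟨hhead, hchain, G, hlast, hcard⟩, _⟩
  cases L with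
  | nil => simp at hhead
  | cons F0 rest =>
    have hF0 : F0 = 0 := by simpa using hhead
    subst hF0
    cases rest with
    | nil =>
      have : G = (0 : Fam) := by symm; simpa using hlast
      subst this
      simp at hcard
    | cons F1 t =>
      unfold List.Chain' at hchain
      rw [List.isChain_cons_cons] at hchain
      obtain ⟨R1, R2, hR1, _, _⟩ := hchain.1
      simp at hR1

end Generic
-- ==================== structure theorem ====================
section Split

def SplitX (A B : Finset Pt) : Prop := ∀ a ∈ A, ∀ b ∈ B, a.1 < b.1
def BelowY (A B : Finset Pt) : Prop := ∀ a ∈ A, ∀ b ∈ B, a.2 < b.2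

def GoodSplit (P : Finset Pt) : Prop :=
  ∃ A B : Finset Pt, A ∪ B = P ∧ Disjoint A B ∧ A.Nonempty ∧ B.Nonempty ∧
    SplitX A B ∧ (BelowY A B ∨ BelowY B A)

lemma subpattern_mono {σ P Q : Finset Pt} (h : P ⊆ Q) (hs : Subpattern σ P) :
    Subpattern σ Q := by
  obtain ⟨φ, h1, h2, h3⟩ := hs
  exact ⟨φ, h1, fun p hp => h (h2 p hp), h3⟩

lemma sep_mono {P Q : Finset Pt} (h : P ⊆ Q) (hs : Separable Q) : Separable P :=
  ⟨fun hc => hs.1 (subpattern_mono h hc), fun hc => hs.2 (subpattern_mono h hc)⟩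

lemma genpos_mono {P Q : Finset Pt} (h : P ⊆ Q) (hg : GenPos Q) : GenPos P :=
  fun p hp q hq hne => hg p (h hp) q (h hq) hne

lemma sub_intro_aux {P : Finset Pt} {a b c d : Pt} {σ : Finset Pt}
    (hσ : σ = {((1:ℕ),(2:ℕ)),(2,4),(3,1),(4,3)} ∨ σ = {((1:ℕ),(3:ℕ)),(2,1),(3,4),(4,2)})
    (ha : a ∈ P) (hb : b ∈ P) (hc : c ∈ P) (hd : d ∈ P)
    (hx1 : a.1 < b.1) (hx2 : b.1 < c.1) (hx3 : c.1 < d.1)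
    (hy : (c.2 < a.2 ∧ a.2 < d.2 ∧ d.2 < b.2) ∧ σ = {((1:ℕ),(2:ℕ)),(2,4),(3,1),(4,3)} ∨
          (b.2 < d.2 ∧ d.2 < a.2 ∧ a.2 < c.2) ∧ σ = {((1:ℕ),(3:ℕ)),(2,1),(3,4),(4,2)}) :
    Subpattern σ P := by
  refine ⟨fun p => if p.1 = 1 then a else if p.1 = 2 then b else if p.1 = 3 then c else d,
    ?_, ?_, ?_⟩
  · intro p hp q hq h
    rcases hy with ⟨⟨hy1, hy2, hy3⟩, rfl⟩ | ⟨⟨hy1, hy2, hy3⟩, rfl⟩ <;>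
    · simp only [Finset.coe_insert, Set.mem_insert_iff, Finset.coe_singleton,
        Set.mem_singleton_iff] at hp hq
      rcases hp with rfl | rfl | rfl | rfl <;> rcases hq with rfl | rfl | rfl | rfl <;>
        norm_num at h ⊢ <;> exact absurd (congrArg Prod.fst h) (by omega)
  · intro p hp
    rcases hy with ⟨⟨hy1, hy2, hy3⟩, rfl⟩ | ⟨⟨hy1, hy2, hy3⟩, rfl⟩ <;>
    · simp only [Finset.mem_insert, Finset.mem_singleton] at hp
      rcases hp with rfl | rfl | rfl | rfl <;> norm_num <;> assumption
  · intro p hp q hq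
    rcases hy with ⟨⟨hy1, hy2, hy3⟩, rfl⟩ | ⟨⟨hy1, hy2, hy3⟩, rfl⟩ <;>
    · simp only [Finset.mem_insert, Finset.mem_singleton] at hp hq
      rcases hp with rfl | rfl | rfl | rfl <;> rcases hq with rfl | rfl | rfl | rfl <;>
        norm_num <;> omega

lemma sub2413_intro {P : Finset Pt} {a b c d : Pt}
    (ha : a ∈ P) (hb : b ∈ P) (hc : c ∈ P) (hd : d ∈ P)
    (hx1 : a.1 < b.1) (hx2 : b.1 < c.1) (hx3 : c.1 < d.1)
    (hy1 : c.2 < a.2) (hy2 : a.2 < d.2) (hy3 : d.2 < b.2) : Subpattern pat2413 P := by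
  have : pat2413 = ({((1:ℕ),(2:ℕ)),(2,4),(3,1),(4,3)} : Finset Pt) := rfl
  rw [this]
  exact sub_intro_aux (Or.inl rfl) ha hb hc hd hx1 hx2 hx3
    (Or.inl ⟨⟨hy1, hy2, hy3⟩, rfl⟩)

lemma sub3142_intro {P : Finset Pt} {a b c d : Pt}
    (ha : a ∈ P) (hb : b ∈ P) (hc : c ∈ P) (hd : d ∈ P)
    (hx1 : a.1 < b.1) (hx2 : b.1 < c.1) (hx3 : c.1 < d.1)
    (hy1 : b.2 < d.2) (hy2 : d.2 < a.2) (hy3 : a.2 < c.2) : Subpattern pat3142 P := by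
  have : pat3142 = ({((1:ℕ),(3:ℕ)),(2,1),(3,4),(4,2)} : Finset Pt) := rfl
  rw [this]
  exact sub_intro_aux (Or.inr rfl) ha hb hc hd hx1 hx2 hx3
    (Or.inr ⟨⟨hy1, hy2, hy3⟩, rfl⟩)

end Split
-- ==================== the splitting argument ====================
section SplitMain

lemma split_of_sep : ∀ (n : ℕ) (P : Finset Pt), P.card ≤ n → GenPos P → Separable P →
    2 ≤ P.card → GoodSplit P := by
  intro n
  induction n with
  | zero => intro P hn _ _ h2; omega
  | succ n ih =>
    intro P hn hgp hsep h2
    have hne : P.Nonempty := Finset.card_pos.1 (by omega)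
    -- the point with maximal x-coordinate
    have hMmem := (P.image Prod.fst).max'_mem (hne.image _)
    obtain ⟨p, hp, hpx⟩ := Finset.mem_image.1 hMmem
    have hmax : ∀ q ∈ P, q ≠ p → q.1 < p.1 := by
      intro q hq hqp
      have h1 : q.1 ≤ (P.image Prod.fst).max' (hne.image _) :=
        Finset.le_max' _ _ (Finset.mem_image_of_mem _ hq)
      have h2 := (hgp q hq p hp hqp).1
      omega
    set P' := P.erase p with hP'def
    have hpP' : p ∉ P' := Finset.notMem_erase p P
    have hsub : P' ⊆ P := Finset.erase_subset p P
    have hins : insert p P' = P := Finset.insert_erase hp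
    have hcard' : P'.card = P.card - 1 := Finset.card_erase_of_mem hp
    have hltp : ∀ q ∈ P', q.1 < p.1 := fun q hq =>
      hmax q (hsub hq) (fun h => hpP' (h ▸ hq))
    have hyne : ∀ q ∈ P', q.2 ≠ p.2 := fun q hq =>
      (hgp q (hsub hq) p hp (Finset.ne_of_mem_erase hq)).2
    have hP'ne : P'.Nonempty := Finset.card_pos.1 (by omega)
    by_cases hAll : ∀ q ∈ P', q.2 < p.2
    · refine ⟨P', {p}, ?_, ?_, hP'ne, ⟨p, Finset.mem_singleton_self p⟩, ?_, Or.inl ?_⟩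
      · rw [Finset.union_comm, ← Finset.insert_eq, hins]
      · rw [Finset.disjoint_singleton_right]; exact hpP'
      · intro a ha b hb; rw [Finset.mem_singleton] at hb; subst hb; exact hltp a ha
      · intro a ha b hb; rw [Finset.mem_singleton] at hb; subst hb; exact hAll a ha
    by_cases hAll0 : ∀ q ∈ P', p.2 < q.2
    · refine ⟨P', {p}, ?_, ?_, hP'ne, ⟨p, Finset.mem_singleton_self p⟩, ?_, Or.inr ?_⟩
      · rw [Finset.union_comm, ← Finset.insert_eq, hins]
      · rw [Finset.disjoint_singleton_right]; exact hpP'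
      · intro a ha b hb; rw [Finset.mem_singleton] at hb; subst hb; exact hltp a ha
      · intro b hb a ha; rw [Finset.mem_singleton] at hb; subst hb; exact hAll0 a ha
    push_neg at hAll hAll0
    obtain ⟨qhi, hqhi, hqhi'⟩ := hAll
    obtain ⟨qlo, hqlo, hqlo'⟩ := hAll0
    have hqhi2 : p.2 < qhi.2 := by have := hyne qhi hqhi; omega
    have hqlo2 : qlo.2 < p.2 := by have := hyne qlo hqlo; omega
    have h2' : 2 ≤ P'.card := by
      by_contra hcon
      have h1 : P'.card = 1 := by
        have := Finset.card_pos.2 hP'ne; omega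
      obtain ⟨q, hq⟩ := Finset.card_eq_one.1 h1
      rw [hq, Finset.mem_singleton] at hqhi hqlo
      subst hqhi; subst hqlo
      omega
    obtain ⟨A, B, hunion, hdisj, hAne, hBne, hsx, hy⟩ :=
      ih P' (by omega) (genpos_mono hsub hgp) (sep_mono hsub hsep) h2'
    have hA : A ⊆ P' := hunion ▸ Finset.subset_union_left
    have hB : B ⊆ P' := hunion ▸ Finset.subset_union_right
    have hpA : p ∉ A := fun h => hpP' (hA h)
    have hmemAB : ∀ q ∈ P', q ∈ A ∨ q ∈ B := by
      intro q hq; rw [← hunion] at hq; exact Finset.mem_union.1 hq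
    rcases hy with hAB | hBA
    · -- A below-left of B
      by_cases hattach : ∀ a ∈ A, a.2 < p.2
      · refine ⟨A, B ∪ {p}, ?_, ?_, hAne, ⟨p, by simp⟩, ?_, Or.inl ?_⟩
        · rw [← Finset.union_assoc, hunion, Finset.union_comm, ← Finset.insert_eq, hins]
        · rw [Finset.disjoint_union_right, Finset.disjoint_singleton_right]
          exact ⟨hdisj, hpA⟩
        · intro a ha b hb
          rcases Finset.mem_union.1 hb with hb | hb
          · exact hsx a ha b hb
          · rw [Finset.mem_singleton] at hb; subst hb; exact hltp a (hA ha)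
        · intro a ha b hb
          rcases Finset.mem_union.1 hb with hb | hb
          · exact hAB a ha b hb
          · rw [Finset.mem_singleton] at hb; subst hb; exact hattach a ha
      · push_neg at hattach
        obtain ⟨a1, ha1, ha1'⟩ := hattach
        have ha12 : p.2 < a1.2 := by have := hyne a1 (hA ha1); omega
        have hqloA : qlo ∈ A := by
          rcases hmemAB qlo hqlo with h | h
          · exact h
          · exact absurd (hAB a1 ha1 qlo h) (by omega)
        by_cases h3 : ∃ u ∈ A, ∃ v ∈ A, u.2 < p.2 ∧ p.2 < v.2 ∧ v.1 < u.1
        · obtain ⟨u, hu, v, hv, hu2, hv2, hvu⟩ := h3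
          obtain ⟨b, hbB⟩ := hBne
          exact absurd (sub3142_intro (hsub (hA hv)) (hsub (hA hu)) (hsub (hB hbB)) hp
            hvu (hsx u hu b hbB) (hltp b (hB hbB)) hu2 hv2 (hAB v hv b hbB)) hsep.2
        · push_neg at h3
          set Alo := A.filter (fun a => a.2 < p.2) with hAlo
          set Ahi := A.filter (fun a => ¬ a.2 < p.2) with hAhi
          have hAhilt : ∀ v ∈ Ahi, p.2 < v.2 := by
            intro v hv
            have h4 := (Finset.mem_filter.1 hv).2
            have := hyne v (hA (Finset.mem_filter.1 hv).1)
            omega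
          have hsplitA : Alo ∪ Ahi = A := Finset.filter_union_filter_not_eq _ A
          refine ⟨Alo, Ahi ∪ B ∪ {p}, ?_, ?_, ⟨qlo, Finset.mem_filter.2 ⟨hqloA, hqlo2⟩⟩,
            ⟨p, by simp⟩, ?_, Or.inl ?_⟩
          · rw [← hins, ← hunion, ← hsplitA]; ext x
            simp only [Finset.mem_union, Finset.mem_insert, Finset.mem_singleton]
            tauto
          · rw [Finset.disjoint_union_right, Finset.disjoint_union_right,
              Finset.disjoint_singleton_right]
            exact ⟨⟨Finset.disjoint_filter_filter_not A A _,
              Finset.disjoint_of_subset_left (Finset.filter_subset _ _) hdisj⟩,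
              fun h => hpA ((Finset.filter_subset _ _) h)⟩
          · intro u hu b hb
            obtain ⟨huA, hu2⟩ := Finset.mem_filter.1 hu
            rcases Finset.mem_union.1 hb with hb | hb
            · rcases Finset.mem_union.1 hb with hb | hb
              · obtain ⟨hvA, _⟩ := Finset.mem_filter.1 hb
                have h5 := h3 u huA b hvA hu2 (hAhilt b hb)
                have h6 : u ≠ b := fun h => by rw [h] at hu2; have := hAhilt b hb; omega
                have := (hgp u (hsub (hA huA)) b (hsub (hA hvA)) h6).1
                omega
              · exact hsx u huA b hb
            · rw [Finset.mem_singleton] at hb; subst hb; exact hltp u (hA huA)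
          · intro u hu b hb
            obtain ⟨huA, hu2⟩ := Finset.mem_filter.1 hu
            rcases Finset.mem_union.1 hb with hb | hb
            · rcases Finset.mem_union.1 hb with hb | hb
              · exact lt_trans hu2 (hAhilt b hb)
              · exact hAB u huA b hb
            · rw [Finset.mem_singleton] at hb; subst hb; exact hu2
    · -- B below A (skew case)
      by_cases hattach : ∀ a ∈ A, p.2 < a.2
      · refine ⟨A, B ∪ {p}, ?_, ?_, hAne, ⟨p, by simp⟩, ?_, Or.inr ?_⟩
        · rw [← Finset.union_assoc, hunion, Finset.union_comm, ← Finset.insert_eq, hins]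
        · rw [Finset.disjoint_union_right, Finset.disjoint_singleton_right]
          exact ⟨hdisj, hpA⟩
        · intro a ha b hb
          rcases Finset.mem_union.1 hb with hb | hb
          · exact hsx a ha b hb
          · rw [Finset.mem_singleton] at hb; subst hb; exact hltp a (hA ha)
        · intro b hb a ha
          rcases Finset.mem_union.1 hb with hb | hb
          · exact hBA b hb a ha
          · rw [Finset.mem_singleton] at hb; subst hb; exact hattach a ha
      · push_neg at hattach
        obtain ⟨a1, ha1, ha1'⟩ := hattach
        have ha12 : a1.2 < p.2 := by have := hyne a1 (hA ha1); omega
        have hqhiA : qhi ∈ A := by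
          rcases hmemAB qhi hqhi with h | h
          · exact h
          · exact absurd (hBA qhi h a1 ha1) (by omega)
        by_cases h3 : ∃ u ∈ A, ∃ v ∈ A, u.2 < p.2 ∧ p.2 < v.2 ∧ u.1 < v.1
        · obtain ⟨u, hu, v, hv, hu2, hv2, huv⟩ := h3
          obtain ⟨b, hbB⟩ := hBne
          exact absurd (sub2413_intro (hsub (hA hu)) (hsub (hA hv)) (hsub (hB hbB)) hp
            huv (hsx v hv b hbB) (hltp b (hB hbB)) (hBA b hbB u hu) hu2 hv2) hsep.1
        · push_neg at h3
          set Alo := A.filter (fun a => a.2 < p.2) with hAlo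
          set Ahi := A.filter (fun a => ¬ a.2 < p.2) with hAhi
          have hAhilt : ∀ v ∈ Ahi, p.2 < v.2 := by
            intro v hv
            have h4 := (Finset.mem_filter.1 hv).2
            have := hyne v (hA (Finset.mem_filter.1 hv).1)
            omega
          have hsplitA : Alo ∪ Ahi = A := Finset.filter_union_filter_not_eq _ A
          refine ⟨Ahi, Alo ∪ B ∪ {p}, ?_, ?_,
            ⟨qhi, Finset.mem_filter.2 ⟨hqhiA, by omega⟩⟩, ⟨p, by simp⟩, ?_, Or.inr ?_⟩
          · rw [← hins, ← hunion, ← hsplitA]; ext x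
            simp only [Finset.mem_union, Finset.mem_insert, Finset.mem_singleton]
            tauto
          · rw [Finset.disjoint_union_right, Finset.disjoint_union_right,
              Finset.disjoint_singleton_right]
            exact ⟨⟨(Finset.disjoint_filter_filter_not A A _).symm,
              Finset.disjoint_of_subset_left (Finset.filter_subset _ _) hdisj⟩,
              fun h => hpA ((Finset.filter_subset _ _) h)⟩
          · intro v hv b hb
            obtain ⟨hvA, hv2⟩ := Finset.mem_filter.1 hv
            have hv2' := hAhilt v hv
            rcases Finset.mem_union.1 hb with hb | hb
            · rcases Finset.mem_union.1 hb with hb | hb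
              · obtain ⟨huA, hu2⟩ := Finset.mem_filter.1 hb
                have h5 := h3 b huA v hvA hu2 hv2'
                have h6 : v ≠ b := fun h => by rw [h] at hv2'; omega
                have := (hgp v (hsub (hA hvA)) b (hsub (hA huA)) h6).1
                omega
              · exact hsx v hvA b hb
            · rw [Finset.mem_singleton] at hb; subst hb; exact hltp v (hA hvA)
          · intro b hb v hv
            obtain ⟨hvA, hv2⟩ := Finset.mem_filter.1 hv
            have hv2' := hAhilt v hv
            rcases Finset.mem_union.1 hb with hb | hb
            · rcases Finset.mem_union.1 hb with hb | hb
              · exact lt_trans (Finset.mem_filter.1 hb).2 hv2'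
              · exact hBA b hb v hvA
            · rw [Finset.mem_singleton] at hb; subst hb; exact hv2'

end SplitMain
-- ==================== the construction ====================
section Build

/-- All four boundary values of a rectangle are attained by points of `P`. -/
def AnchX (P : Finset Pt) (R : Rect) : Prop :=
  (∃ q ∈ P, R.1.1 = q.1) ∧ (∃ q ∈ P, R.1.2 = q.1) ∧
  (∃ q ∈ P, R.2.1 = q.2) ∧ (∃ q ∈ P, R.2.2 = q.2)

lemma anch_mono {P Q : Finset Pt} (h : P ⊆ Q) {R : Rect} (ha : AnchX P R) : AnchX Q R := by
  obtain ⟨⟨q1, h1, e1⟩, ⟨q2, h2, e2⟩, ⟨q3, h3, e3⟩, ⟨q4, h4, e4⟩⟩ := ha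
  exact ⟨⟨q1, h h1, e1⟩, ⟨q2, h h2, e2⟩, ⟨q3, h h3, e3⟩, ⟨q4, h h4, e4⟩⟩

lemma anch_ptRect {P : Finset Pt} {p : Pt} (hp : p ∈ P) : AnchX P (ptRect p) :=
  ⟨⟨p, hp, rfl⟩, ⟨p, hp, rfl⟩, ⟨p, hp, rfl⟩, ⟨p, hp, rfl⟩⟩

lemma anch_min {P : Finset Pt} {x y : ℕ} {f : Pt → ℕ}
    (hx : ∃ q ∈ P, x = f q) (hy : ∃ q ∈ P, y = f q) : ∃ q ∈ P, min x y = f q := by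
  rcases le_total x y with h | h
  · rw [min_eq_left h]; exact hx
  · rw [min_eq_right h]; exact hy

lemma anch_max {P : Finset Pt} {x y : ℕ} {f : Pt → ℕ}
    (hx : ∃ q ∈ P, x = f q) (hy : ∃ q ∈ P, y = f q) : ∃ q ∈ P, max x y = f q := by
  rcases le_total x y with h | h
  · rw [max_eq_right h]; exact hy
  · rw [max_eq_left h]; exact hx

lemma anch_bbox {P : Finset Pt} {R1 R2 : Rect} (h1 : AnchX P R1) (h2 : AnchX P R2) :
    AnchX P (bbox R1 R2) := by
  obtain ⟨a1, a2, a3, a4⟩ := h1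
  obtain ⟨b1, b2, b3, b4⟩ := h2
  exact ⟨anch_min a1 b1, anch_max a2 b2, anch_min a3 b3, anch_max a4 b4⟩

lemma ptRect_inj : Function.Injective ptRect := by
  intro p q h
  simpa [ptRect, Prod.ext_iff] using h

lemma wide_ptRects {P : Finset Pt} (hgp : GenPos P) :
    Wide 1 (Multiset.map ptRect P.val) := by
  rw [wide_one_iff]
  intro R hR R' hR' α hv
  have hnd : (Multiset.map ptRect P.val).Nodup := P.nodup.map ptRect_inj
  obtain ⟨hne, hmem⟩ := (hnd.mem_erase_iff).1 hR'
  obtain ⟨p, hp, rfl⟩ := Multiset.mem_map.1 hR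
  obtain ⟨q, hq, rfl⟩ := Multiset.mem_map.1 hmem
  have hpq : q ≠ p := fun h => hne (by rw [h])
  have := hgp q hq p hp hpq
  obtain ⟨h1, h2⟩ := hv
  fin_cases α
  · simp only [Fin.mk_zero, rproj_zero, ptRect] at h1 h2
    omega
  · simp only [Fin.mk_one, rproj_one, ptRect] at h1 h2
    omega

lemma noview_cross {A B : Finset Pt} (hsx : SplitX A B) (hy : BelowY A B ∨ BelowY B A)
    {R R' : Rect} (hR : AnchX A R) (hR' : AnchX B R') :
    ∀ α : Fin 2, ¬ rviews α R R' ∧ ¬ rviews α R' R := by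
  obtain ⟨⟨a1, ha1, e1⟩, ⟨a2, ha2, e2⟩, ⟨a3, ha3, e3⟩, ⟨a4, ha4, e4⟩⟩ := hR
  obtain ⟨⟨b1, hb1, f1⟩, ⟨b2, hb2, f2⟩, ⟨b3, hb3, f3⟩, ⟨b4, hb4, f4⟩⟩ := hR'
  intro α
  fin_cases α
  · have h1 : a2.1 < b1.1 := hsx a2 ha2 b1 hb1
    have h2 : a1.1 < b2.1 := hsx a1 ha1 b2 hb2
    constructor <;>
    · rintro ⟨u, v⟩
      simp only [Fin.mk_zero, rproj_zero] at u v
      omega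
  · rcases hy with hAB | hBA
    · have h1 : a4.2 < b3.2 := hAB a4 ha4 b3 hb3
      have h2 : a3.2 < b4.2 := hAB a3 ha3 b4 hb4
      constructor <;>
      · rintro ⟨u, v⟩
        simp only [Fin.mk_one, rproj_one] at u v
        omega
    · have h1 : b4.2 < a3.2 := hBA b4 hb4 a3 ha3
      have h2 : b3.2 < a4.2 := hBA b3 hb3 a4 ha4
      constructor <;>
      · rintro ⟨u, v⟩
        simp only [Fin.mk_one, rproj_one] at u v
        omega

lemma wide_singleton (R : Rect) : Wide 1 ({R} : Fam) := by
  rw [wide_one_iff]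
  intro S hS S' hS' α
  rw [Multiset.mem_singleton] at hS
  subst hS
  have : ({S} : Fam).erase S = 0 := by
    have : ({S} : Fam) = S ::ₘ 0 := rfl
    rw [this, Multiset.erase_cons_head]
  rw [this] at hS'
  simp at hS'

lemma mergeStep_add' (S : Fam) {F F' : Fam} (h : MergeStep F F') :
    MergeStep (F + S) (F' + S) := by
  rw [add_comm F S, add_comm F' S]
  exact mergeStep_add S h

lemma mergeStep_pair (RA RB : Rect) : MergeStep (RA ::ₘ {RB}) {bbox RA RB} := by
  refine ⟨RA, RB, Multiset.mem_cons_self _ _, ?_, ?_⟩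
  · rw [Multiset.erase_cons_head]; exact Multiset.mem_singleton_self RB
  · rw [Multiset.erase_cons_head]
    have : ({RB} : Fam) = RB ::ₘ 0 := rfl
    rw [this, Multiset.erase_cons_head]
    rfl

end Build

section Build2

lemma mergeStep_cons (R : Rect) {F F' : Fam} (h : MergeStep F F') :
    MergeStep (R ::ₘ F) (R ::ₘ F') := by
  rw [← Multiset.singleton_add, ← Multiset.singleton_add]
  exact mergeStep_add _ h

lemma build : ∀ (n : ℕ) (P : Finset Pt), P.card ≤ n → GenPos P → Separable P → P.Nonempty →
    ∃ L : List Fam, IsDecomp P L ∧ (∀ F ∈ L, Wide 1 F) ∧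
      (∀ F ∈ L, ∀ R ∈ F, AnchX P R) := by
  intro n
  induction n with
  | zero => intro P h _ _ hne; exact absurd (Finset.card_pos.2 hne) (by omega)
  | succ n ih =>
    intro P hn hgp hsep hne
    by_cases h1 : P.card ≤ 1
    · refine ⟨[Multiset.map ptRect P.val], ⟨rfl, List.isChain_singleton _, ⟨Multiset.map ptRect P.val, rfl, ?_⟩⟩, ?_, ?_⟩
      · rw [Multiset.card_map]
        exact le_antisymm h1 (Finset.card_pos.2 hne)
      · intro F hF; rw [List.mem_singleton] at hF; subst hF; exact wide_ptRects hgp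
      · intro F hF R hR; rw [List.mem_singleton] at hF; subst hF
        obtain ⟨p, hp, rfl⟩ := Multiset.mem_map.1 hR
        exact anch_ptRect hp
    · obtain ⟨A, B, hunion, hdisj, hAne, hBne, hsx, hy⟩ :=
        split_of_sep (n+1) P hn hgp hsep (by omega)
      have hAP : A ⊆ P := hunion ▸ Finset.subset_union_left
      have hBP : B ⊆ P := hunion ▸ Finset.subset_union_right
      have hcards : A.card + B.card = P.card := by
        rw [← Finset.card_union_of_disjoint hdisj, hunion]
      have hA1 : 1 ≤ A.card := Finset.card_pos.2 hAne
      have hB1 : 1 ≤ B.card := Finset.card_pos.2 hBne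
      obtain ⟨LA, ⟨hheadA, hchainA, GA, hlastA, hcardA⟩, hwideA, hanchA⟩ :=
        ih A (by omega) (genpos_mono hAP hgp) (sep_mono hAP hsep) hAne
      obtain ⟨LB, ⟨hheadB, hchainB, GB, hlastB, hcardB⟩, hwideB, hanchB⟩ :=
        ih B (by omega) (genpos_mono hBP hgp) (sep_mono hBP hsep) hBne
      obtain ⟨RA, hGA⟩ := Multiset.card_eq_one.1 hcardA
      obtain ⟨RB, hGB⟩ := Multiset.card_eq_one.1 hcardB
      subst hGA; subst hGB
      have hGAmem : ({RA} : Fam) ∈ LA := by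
        obtain ⟨h, he⟩ := List.mem_getLast?_eq_getLast (Option.mem_def.2 hlastA)
        rw [he]; exact List.getLast_mem h
      have hGBmem : ({RB} : Fam) ∈ LB := by
        obtain ⟨h, he⟩ := List.mem_getLast?_eq_getLast (Option.mem_def.2 hlastB)
        rw [he]; exact List.getLast_mem h
      have hanchRA : AnchX A RA := hanchA _ hGAmem RA (Multiset.mem_singleton_self RA)
      have hanchRB : AnchX B RB := hanchB _ hGBmem RB (Multiset.mem_singleton_self RB)
      set SB : Fam := Multiset.map ptRect B.val with hSB
      have hanchSB : ∀ R ∈ SB, AnchX B R := by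
        intro R hR; obtain ⟨b, hb, rfl⟩ := Multiset.mem_map.1 hR; exact anch_ptRect hb
      have hwideSB : Wide 1 SB := wide_ptRects (genpos_mono hBP hgp)
      have hval : A.val + B.val = P.val := by
        rw [← hunion, ← Finset.disjUnion_eq_union A B hdisj]; rfl
      cases LA with
      | nil => simp at hheadA
      | cons FA0 tA =>
      cases LB with
      | nil => simp at hheadB
      | cons FB0 tB =>
      have hFA0 : FA0 = Multiset.map ptRect A.val := by simpa using hheadA
      have hFB0 : FB0 = SB := by simpa using hheadB
      set L1 : List Fam := (FA0 :: tA).map (· + SB) with hL1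
      set L2 : List Fam := tB.map (fun F => RA ::ₘ F) with hL2
      have hlastL1 : L1.getLast? = some ({RA} + SB) := by
        rw [hL1, List.getLast?_map, hlastA]; rfl
      refine ⟨L1 ++ (L2 ++ [{bbox RA RB}]), ⟨?_, ?_, ⟨{bbox RA RB}, ?_, rfl⟩⟩, ?_, ?_⟩
      · show some (FA0 + SB) = some (Multiset.map ptRect P.val)
        rw [hFA0, hSB, ← Multiset.map_add, hval]
      · unfold List.Chain'
        rw [List.isChain_append]
        refine ⟨?_, ?_, ?_⟩
        · exact (List.isChain_map _).2 (hchainA.imp (fun a b h => mergeStep_add' SB h))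
        · rw [List.isChain_append]
          refine ⟨?_, List.isChain_singleton _, ?_⟩
          · exact (List.isChain_map _).2 (hchainB.tail.imp (fun a b h => mergeStep_cons RA h))
          · intro x hx y hy
            have hy' : y = {bbox RA RB} := Eq.symm (by simpa using hy)
            subst hy'
            cases tB with
            | nil => simp [hL2] at hx
            | cons FB1 tB' =>
              have : L2.getLast? = some (RA ::ₘ {RB}) := by
                rw [hL2, List.getLast?_map]
                rw [List.getLast?_cons_cons] at hlastB
                rw [hlastB]; rfl
              rw [this] at hx
              have hx' : x = RA ::ₘ {RB} := Eq.symm (by simpa using hx)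
              subst hx'
              exact mergeStep_pair RA RB
        · intro x hx y hy
          rw [hlastL1] at hx
          have hx' : x = {RA} + SB := Eq.symm (by simpa using hx)
          subst hx'
          cases tB with
          | nil =>
            have hy' : y = {bbox RA RB} := Eq.symm (by simpa [hL2] using hy)
            subst hy'
            have hFB0' : FB0 = ({RB} : Fam) := by simpa using hlastB
            have hSBR : SB = ({RB} : Fam) := by rw [← hFB0, hFB0']
            rw [hSBR, Multiset.singleton_add]
            exact mergeStep_pair RA RB
          | cons FB1 tB' =>
            have hy' : y = RA ::ₘ FB1 := Eq.symm (by simpa [hL2] using hy)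
            subst hy'
            rw [Multiset.singleton_add, ← hFB0]
            exact mergeStep_cons RA (List.isChain_cons_cons.1 hchainB).1
      · rw [List.getLast?_append, List.getLast?_append]
        rfl
      · intro F hF
        rcases List.mem_append.1 hF with hF | hF
        · obtain ⟨FA, hFA, rfl⟩ := List.mem_map.1 hF
          refine wide_one_add (hwideA FA hFA) hwideSB ?_
          intro R hR R' hR' α
          exact noview_cross hsx hy (hanchA FA hFA R hR) (hanchSB R' hR') α
        · rcases List.mem_append.1 hF with hF | hF
          · obtain ⟨FB, hFB, rfl⟩ := List.mem_map.1 hF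
            rw [← Multiset.singleton_add]
            refine wide_one_add (wide_singleton RA) (hwideB FB (List.mem_of_mem_tail hFB)) ?_
            intro R hR R' hR' α
            rw [Multiset.mem_singleton] at hR
            subst hR
            exact noview_cross hsx hy hanchRA (hanchB FB (List.mem_of_mem_tail hFB) R' hR') α
          · rw [List.mem_singleton] at hF
            subst hF
            exact wide_singleton _
      · intro F hF R hR
        rcases List.mem_append.1 hF with hF | hF
        · obtain ⟨FA, hFA, rfl⟩ := List.mem_map.1 hF
          rcases Multiset.mem_add.1 hR with hR | hR
          · exact anch_mono hAP (hanchA FA hFA R hR)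
          · exact anch_mono hBP (hanchSB R hR)
        · rcases List.mem_append.1 hF with hF | hF
          · obtain ⟨FB, hFB, rfl⟩ := List.mem_map.1 hF
            rcases Multiset.mem_cons.1 hR with rfl | hR
            · exact anch_mono hAP hanchRA
            · exact anch_mono hBP (hanchB FB (List.mem_of_mem_tail hFB) R hR)
          · rw [List.mem_singleton] at hF
            subst hF
            rw [Multiset.mem_singleton] at hR
            subst hR
            exact anch_bbox (anch_mono hAP hanchRA) (anch_mono hBP hanchRB)

end Build2

/-- a permutation is separable iff its width is at most 1. -/
theorem stmt3 (P : Finset Pt) (hP : GenPos P) : Separable P ↔ permWidth P ≤ 1 := by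
  constructor
  · intro hsep
    rcases P.eq_empty_or_nonempty with rfl | hne
    · unfold permWidth
      rw [width_empty, Nat.sInf_empty]
      omega
    · obtain ⟨L, hdec, hwide, _⟩ := build P.card P le_rfl hP hsep hne
      exact Nat.sInf_le ⟨L, hdec, hwide⟩
  · intro hw
    rcases P.eq_empty_or_nonempty with rfl | hne
    · exact sep_empty
    · have hmem : permWidth P ∈ {d | HasWidthLE P d} :=
        Nat.sInf_mem ⟨P.card, exists_width hne⟩
      exact sep_of_width1 (hasWidth_mono hw hmem)
end
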